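/- arXiv:2002.03904 — 9 statements merged into one kernel-verified Lean document; each statement's English description precedes it below -/
import Mathlib

section
/- Let X be a normed space over ℝ or ℂ that is smooth at a point x ≠ 0. Then the norm of X is Gateaux differentiable at x, and the real part of the unique support functional φ_x at x satisfies Re φ_x(y) = lim_{t→0, t∈ℝ} (‖x + t y‖ - ‖x‖)/t for all y ∈ X. -/
open RCLike

/-- A support functional at `x`: a norm-one continuous linear functional with `φ x = ‖x‖`. -/
def SuppFunc (𝕜 : Type*) [RCLike 𝕜] {X : Type*} [NormedAddCommGroup X] [NormedSpace 𝕜 X]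
    (x : X) (φ : X →L[𝕜] 𝕜) : Prop :=
  ‖φ‖ = 1 ∧ φ x = (‖x‖ : 𝕜)

/-- `X` is smooth at `x` if there is a unique support functional at `x`. -/
def NormSmoothAt (𝕜 : Type*) [RCLike 𝕜] {X : Type*} [NormedAddCommGroup X] [NormedSpace 𝕜 X]
    (x : X) : Prop := ∃! φ : X →L[𝕜] 𝕜, SuppFunc 𝕜 x φ

/-- `X` is smooth if it is smooth at every nonzero point. -/
def NormSmooth (𝕜 : Type*) (X : Type*) [RCLike 𝕜] [NormedAddCommGroup X] [NormedSpace 𝕜 X] :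
    Prop := ∀ x : X, x ≠ 0 → NormSmoothAt 𝕜 x

/-- `sip` is the canonical semi-inner product `[u,v] = ‖v‖ * φ_v u` built from support
functionals (on a smooth space this pins `sip` down uniquely). -/
def IsCompatSIP (𝕜 : Type*) {X : Type*} [RCLike 𝕜] [NormedAddCommGroup X] [NormedSpace 𝕜 X]
    (sip : X → X → 𝕜) : Prop :=
  (∀ u : X, sip u 0 = 0) ∧
  ∀ (u v : X) (φ : X →L[𝕜] 𝕜), SuppFunc 𝕜 v φ → sip u v = (‖v‖ : 𝕜) * φ u

/-- Birkhoff–James orthogonality: `x ⊥ y` iff `‖x + a • y‖ ≥ ‖x‖` for all scalars. -/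
def BJOrth (𝕜 : Type*) {X : Type*} [RCLike 𝕜] [NormedAddCommGroup X] [NormedSpace 𝕜 X]
    (x y : X) : Prop := ∀ a : 𝕜, ‖x‖ ≤ ‖x + a • y‖

/-- A semi-inner product compatible with the norm: additive and homogeneous in the first
variable, conjugate-homogeneous in the second, positive definite, Cauchy–Schwarz, and
`[x,x] = ‖x‖²`. -/
def IsSIP (𝕜 : Type*) {X : Type*} [RCLike 𝕜] [NormedAddCommGroup X] [NormedSpace 𝕜 X]
    (sip : X → X → 𝕜) : Prop :=
  (∀ x y z : X, sip (x + y) z = sip x z + sip y z) ∧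
  (∀ (a : 𝕜) (x y : X), sip (a • x) y = a * sip x y) ∧
  (∀ (a : 𝕜) (x y : X), sip x (a • y) = (starRingEnd 𝕜) a * sip x y) ∧
  (∀ x : X, x ≠ 0 → 0 < re (sip x x) ∧ im (sip x x) = 0) ∧
  (∀ x y : X, ‖sip x y‖ ≤ Real.sqrt (re (sip x x)) * Real.sqrt (re (sip y y))) ∧
  (∀ x : X, sip x x = (‖x‖ : 𝕜) ^ 2)

/-!
For fixed `x`, the function `t ↦ ‖x + t • z‖` is convex, so it has one-sided derivatives at `0`.
The right one, `p z = normDirDeriv x z`, is sublinear in `z`, bounded by `‖z‖`, and satisfies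
`p (± x) = ± ‖x‖`; the left one is `-p (-z)`. By Hahn–Banach (extend `c • y ↦ c * d` below `p`,
then pass from real to `𝕜`-linear functionals), every `d ∈ [-p (-y), p y]` is `re (ψ y)` for
some support functional `ψ` at `x`. Smoothness at `x` therefore collapses this interval to the
point `re (φ y)`, i.e. the two one-sided derivatives agree.
-/

open Filter Set Topology

theorem exists_linearMap_le_sublinear_eq {E : Type*} [AddCommGroup E] [Module ℝ E] (p : E → ℝ)
    (hsmul : ∀ c : ℝ, 0 < c → ∀ z, p (c • z) = c * p z) (hadd : ∀ z w, p (z + w) ≤ p z + p w)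
    {y : E} {d : ℝ} (hd₁ : -p (-y) ≤ d) (hd₂ : d ≤ p y) :
    ∃ g : E →ₗ[ℝ] ℝ, (∀ z, g z ≤ p z) ∧ g y = d := by
  have hp0 : p 0 = 0 := by
    have h := hsmul 2 two_pos 0
    rw [smul_zero] at h
    linarith
  have hker : ∀ c : ℝ, c • y = 0 → (RingHom.id ℝ) c • d = 0 := by
    intro c hc
    rcases smul_eq_zero.1 hc with rfl | rfl
    · simp
    · simp [show d = 0 by simp [hp0] at hd₁ hd₂; linarith]
  let f := LinearPMap.mkSpanSingleton' y d hker
  have hf : ∀ u : f.domain, f u ≤ p u := by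
    rintro ⟨u, hu⟩
    obtain ⟨c, rfl⟩ := Submodule.mem_span_singleton.1 hu
    rw [LinearPMap.mkSpanSingleton'_apply, RingHom.id_apply, smul_eq_mul, Submodule.coe_mk]
    rcases lt_trichotomy c 0 with hc | rfl | hc
    · rw [show c • y = (-c) • -y by module, hsmul _ (neg_pos.2 hc)]
      nlinarith
    · simp [hp0]
    · rw [hsmul c hc]
      exact mul_le_mul_of_nonneg_left hd₂ hc.le
  obtain ⟨g, hgf, hgp⟩ := exists_extension_of_le_sublinear f p hsmul hadd hf
  refine ⟨g, hgp, ?_⟩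
  rw [hgf ⟨y, Submodule.mem_span_singleton_self y⟩]
  exact LinearPMap.mkSpanSingleton'_apply_self y d hker _

section RealNormedSpace

variable {X : Type*} [NormedAddCommGroup X] [NormedSpace ℝ X]

noncomputable def normDirDeriv (x z : X) : ℝ :=
  derivWithin (fun t : ℝ => ‖x + t • z‖) (Ioi 0) 0

theorem convexOn_norm_add_smul (x z : X) : ConvexOn ℝ univ fun t : ℝ => ‖x + t • z‖ := by
  have h := convexOn_univ_norm.comp_affineMap (AffineMap.lineMap x (x + z) : ℝ →ᵃ[ℝ] X)
  have hf : (fun t : ℝ => ‖x + t • z‖) = norm ∘ AffineMap.lineMap x (x + z) := by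
    ext t
    simp [AffineMap.lineMap_apply, add_comm]
  simpa [hf] using h

theorem hasDerivWithinAt_norm_add_smul_Ioi (x z : X) :
    HasDerivWithinAt (fun t : ℝ => ‖x + t • z‖) (normDirDeriv x z) (Ioi 0) 0 :=
  (convexOn_norm_add_smul x z).hasDerivWithinAt_rightDeriv_of_mem_interior (by simp)

theorem hasDerivWithinAt_norm_add_smul_Iio (x z : X) :
    HasDerivWithinAt (fun t : ℝ => ‖x + t • z‖) (-normDirDeriv x (-z)) (Iio 0) 0 := by
  have h := (hasDerivWithinAt_norm_add_smul_Ioi x (-z)).scomp_of_eq (0 : ℝ)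
    (hasDerivAt_neg 0).hasDerivWithinAt
    (fun t (ht : t ∈ Iio 0) => show -t ∈ Ioi 0 from neg_pos.2 ht) neg_zero.symm
  simpa [Function.comp_def] using h

theorem tendsto_slope_norm_add_smul (x z : X) :
    Tendsto (fun t : ℝ => (‖x + t • z‖ - ‖x‖) / t) (𝓝[>] 0) (𝓝 (normDirDeriv x z)) := by
  refine ((hasDerivWithinAt_iff_tendsto_slope' (lt_irrefl 0)).1
    (hasDerivWithinAt_norm_add_smul_Ioi x z)).congr fun t => ?_
  simp [slope_def_field]

theorem normDirDeriv_eq_of_hasDerivWithinAt {x z : X} {d : ℝ}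
    (h : HasDerivWithinAt (fun t : ℝ => ‖x + t • z‖) d (Ioi 0) 0) : normDirDeriv x z = d :=
  h.derivWithin (uniqueDiffWithinAt_Ioi 0)

theorem normDirDeriv_smul_self (x : X) (c : ℝ) : normDirDeriv x (c • x) = c * ‖x‖ := by
  have hline : HasDerivAt (fun t : ℝ => 1 + c * t) c 0 := by
    simpa using ((hasDerivAt_id (0 : ℝ)).const_mul c).const_add 1
  have habs : HasDerivAt (fun t : ℝ => |1 + c * t|) c 0 := by
    refine hline.congr_of_eventuallyEq ?_
    filter_upwards [hline.continuousAt.eventually (lt_mem_nhds (by simp : (0 : ℝ) < 1 + c * 0))]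
      with t ht
    exact abs_of_pos ht
  have hf : (fun t : ℝ => ‖x + t • c • x‖) = fun t => |1 + c * t| * ‖x‖ := by
    ext t
    rw [show x + t • c • x = (1 + c * t) • x by module, norm_smul, Real.norm_eq_abs]
  refine normDirDeriv_eq_of_hasDerivWithinAt ?_
  rw [hf]
  exact (habs.mul_const ‖x‖).hasDerivWithinAt

theorem normDirDeriv_smul_of_pos (x z : X) {c : ℝ} (hc : 0 < c) :
    normDirDeriv x (c • z) = c * normDirDeriv x z := by
  have h := (hasDerivWithinAt_norm_add_smul_Ioi x z).scomp_of_eq (0 : ℝ)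
    ((hasDerivAt_mul_const c).hasDerivWithinAt (s := Ioi 0))
    (fun t (ht : t ∈ Ioi 0) => show t * c ∈ Ioi 0 from mul_pos ht hc) (zero_mul c).symm
  refine normDirDeriv_eq_of_hasDerivWithinAt ?_
  simpa [Function.comp_def, mul_smul] using h

theorem normDirDeriv_le_norm (x z : X) : normDirDeriv x z ≤ ‖z‖ := by
  calc normDirDeriv x z ≤ slope (fun t : ℝ => ‖x + t • z‖) 0 1 :=
        (convexOn_norm_add_smul x z).rightDeriv_le_slope (mem_univ _) (mem_univ _) one_pos
          (hasDerivWithinAt_norm_add_smul_Ioi x z).differentiableWithinAt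
    _ ≤ ‖z‖ := by
      simpa [slope_def_field] using norm_sub_norm_le (x + z) x

theorem neg_normDirDeriv_neg_le (x z : X) : -normDirDeriv x (-z) ≤ normDirDeriv x z := by
  have h := (convexOn_norm_add_smul x z).leftDeriv_le_rightDeriv_of_mem_interior
    (x := 0) (by simp)
  rwa [(hasDerivWithinAt_norm_add_smul_Iio x z).derivWithin (uniqueDiffWithinAt_Iio 0)] at h

theorem normDirDeriv_add_le (x z w : X) :
    normDirDeriv x (z + w) ≤ normDirDeriv x z + normDirDeriv x w := by
  have hlim := ((tendsto_slope_norm_add_smul x ((2 : ℝ) • z)).add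
    (tendsto_slope_norm_add_smul x ((2 : ℝ) • w))).div_const 2
  rw [normDirDeriv_smul_of_pos x z two_pos, normDirDeriv_smul_of_pos x w two_pos,
    ← mul_add, mul_div_cancel_left₀ _ two_ne_zero] at hlim
  refine le_of_tendsto_of_tendsto (tendsto_slope_norm_add_smul x (z + w)) hlim ?_
  filter_upwards [self_mem_nhdsWithin] with t (ht : 0 < t)
  have hmid : x + t • (z + w) = (2 : ℝ)⁻¹ • ((x + t • (2 : ℝ) • z) + (x + t • (2 : ℝ) • w)) := by
    module
  have hconv : ‖x + t • (z + w)‖ ≤ (‖x + t • (2 : ℝ) • z‖ + ‖x + t • (2 : ℝ) • w‖) / 2 := by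
    rw [hmid, norm_smul, Real.norm_of_nonneg (by norm_num), inv_mul_eq_div]
    gcongr
    exact norm_add_le _ _
  calc (‖x + t • (z + w)‖ - ‖x‖) / t
      ≤ ((‖x + t • (2 : ℝ) • z‖ + ‖x + t • (2 : ℝ) • w‖) / 2 - ‖x‖) / t := by gcongr
    _ = _ := by ring

theorem hasDerivAt_norm_add_smul {x z : X} (h : -normDirDeriv x (-z) = normDirDeriv x z) :
    HasDerivAt (fun t : ℝ => ‖x + t • z‖) (normDirDeriv x z) 0 := by
  have hl := hasDerivWithinAt_norm_add_smul_Iio x z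
  rw [h] at hl
  have h' := hl.union (hasDerivWithinAt_norm_add_smul_Ioi x z)
  rwa [Iio_union_Ioi, compl_eq_univ_sdiff, hasDerivWithinAt_sdiff_singleton,
    hasDerivWithinAt_univ] at h'

end RealNormedSpace

section RCLike

variable {𝕜 : Type*} [RCLike 𝕜] {X : Type*} [NormedAddCommGroup X] [NormedSpace 𝕜 X]

theorem suppFunc_of_opNorm_le_one {x : X} (hx : x ≠ 0) {ψ : X →L[𝕜] 𝕜} (hψ : ‖ψ‖ ≤ 1)
    (hre : re (ψ x) = ‖x‖) : SuppFunc 𝕜 x ψ := by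
  have hle : ‖ψ x‖ ≤ ‖x‖ := by simpa using ψ.le_of_opNorm_le hψ x
  have hψx : ψ x = (‖x‖ : 𝕜) := by
    rw [← hre]
    exact (re_eq_self_of_le (hre ▸ hle)).symm
  refine ⟨le_antisymm hψ ?_, hψx⟩
  have h := ψ.ratio_le_opNorm x
  rwa [hψx, norm_ofReal, abs_norm, div_self (norm_ne_zero_iff.2 hx)] at h

variable [NormedSpace ℝ X] [IsScalarTower ℝ 𝕜 X]

theorem exists_suppFunc_re_eq_of_le_norm {x : X} (hx : x ≠ 0) (g : X →ₗ[ℝ] ℝ)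
    (hg : ∀ z, g z ≤ ‖z‖) (hgx : g x = ‖x‖) :
    ∃ ψ : X →L[𝕜] 𝕜, SuppFunc 𝕜 x ψ ∧ ∀ z, re (ψ z) = g z := by
  have habs : ∀ z, |g z| ≤ normSeminorm 𝕜 X z := fun z => by
    rw [abs_le, coe_normSeminorm]
    exact ⟨by linarith [map_neg g z, norm_neg z, hg (-z)], hg z⟩
  let ψ : X →L[𝕜] 𝕜 := (Module.Dual.extendRCLike g).mkContinuous 1 fun z => by
    simpa using Module.Dual.norm_extendRCLike_le_seminorm g habs z
  have hre : ∀ z, re (ψ z) = g z := Module.Dual.re_extendRCLike_apply g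
  exact ⟨ψ, suppFunc_of_opNorm_le_one hx
    (LinearMap.mkContinuous_norm_le _ zero_le_one _) (by rw [hre, hgx]), hre⟩

theorem exists_suppFunc_re_eq {x : X} (hx : x ≠ 0) {y : X} {d : ℝ}
    (hd₁ : -normDirDeriv x (-y) ≤ d) (hd₂ : d ≤ normDirDeriv x y) :
    ∃ ψ : X →L[𝕜] 𝕜, SuppFunc 𝕜 x ψ ∧ re (ψ y) = d := by
  obtain ⟨g, hgp, hgy⟩ := exists_linearMap_le_sublinear_eq (normDirDeriv x)
    (fun c hc z => normDirDeriv_smul_of_pos x z hc) (normDirDeriv_add_le x) hd₁ hd₂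
  have hgx : g x = ‖x‖ := by
    have h₁ := hgp ((1 : ℝ) • x)
    have h₂ := hgp ((-1 : ℝ) • x)
    rw [normDirDeriv_smul_self] at h₁ h₂
    simp only [one_smul, neg_one_smul, map_neg] at h₁ h₂
    linarith
  obtain ⟨ψ, hψ, hre⟩ := exists_suppFunc_re_eq_of_le_norm (𝕜 := 𝕜) hx g
    (fun z => (hgp z).trans (normDirDeriv_le_norm x z)) hgx
  exact ⟨ψ, hψ, (hre y).trans hgy⟩

theorem NormSmoothAt.normDirDeriv_eq_re {x : X} (hx : x ≠ 0) (hsm : NormSmoothAt 𝕜 x)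
    {φ : X →L[𝕜] 𝕜} (hφ : SuppFunc 𝕜 x φ) (y : X) :
    normDirDeriv x y = re (φ y) ∧ -normDirDeriv x (-y) = re (φ y) := by
  have hle := neg_normDirDeriv_neg_le x y
  obtain ⟨ψ₁, hψ₁, hre₁⟩ := exists_suppFunc_re_eq (𝕜 := 𝕜) hx hle le_rfl
  obtain ⟨ψ₂, hψ₂, hre₂⟩ := exists_suppFunc_re_eq (𝕜 := 𝕜) hx le_rfl hle
  constructor
  · rw [← hsm.unique hψ₁ hφ, hre₁]
  · rw [← hsm.unique hψ₂ hφ, hre₂]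

end RCLike

theorem stmt0 {𝕜 : Type*} [RCLike 𝕜] {X : Type*} [NormedAddCommGroup X] [NormedSpace 𝕜 X]
    (x : X) (hx : x ≠ 0) (hsm : NormSmoothAt 𝕜 x)
    (φ : X →L[𝕜] 𝕜) (hφ : SuppFunc 𝕜 x φ) (y : X) :
    Filter.Tendsto (fun t : ℝ => (‖x + (t : 𝕜) • y‖ - ‖x‖) / t)
      (nhdsWithin (0 : ℝ) {(0 : ℝ)}ᶜ) (nhds (re (φ y))) := by
  let _ : NormedSpace ℝ X := NormedSpace.restrictScalars ℝ 𝕜 X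
  let _ : IsScalarTower ℝ 𝕜 X := IsScalarTower.of_algebraMap_smul fun _ _ => rfl
  obtain ⟨hright, hleft⟩ := hsm.normDirDeriv_eq_re hx hφ y
  have h := hasDerivAt_iff_tendsto_slope.1 (hasDerivAt_norm_add_smul (hleft.trans hright.symm))
  rw [hright] at h
  refine h.congr fun t => ?_
  rw [slope_def_field, ← RCLike.real_smul_eq_coe_smul (K := 𝕜)]
  simp
end

section
/- Let X be a smooth normed space. Then the map [x, y] := ‖y‖ · φ_y(x), where φ_y is the unique support functional at y (and [x, 0] := 0), is the unique semi-inner product on X compatible with the norm, i.e., it satisfies additivity and homogeneity in the first variable, conjugate homogeneity in the second variable, [x,x] > 0 for x ≠ 0, the Cauchy–Schwarz inequality |[x,y]| ≤ [x,x]^{1/2}[y,y]^{1/2}, and [x,x]^{1/2} = ‖x‖. -/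
open RCLike

/-!
Writing `[x, y] = ‖y‖ φ_y(x)`, linearity in `x` is that of `φ_y`, Cauchy–Schwarz is `‖φ_y‖ = 1`,
and conjugate homogeneity holds because `(ā / |a|) φ_y` is a support functional at `a y`.
Conversely, for any semi-inner product `[·,·]'` and `y ≠ 0`, the functional `x ↦ [x, y]' / ‖y‖`
has norm one by Cauchy–Schwarz and takes the value `‖y‖` at `y`, so it is a support functional
at `y`, and compatibility forces `[x, y]' = [x, y]`.
-/

open ComplexConjugate

theorem sqrt_re_self_eq_norm {𝕜 X : Type*} [RCLike 𝕜] [NormedAddCommGroup X]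
    {sip : X → X → 𝕜} (hself : ∀ x : X, sip x x = (‖x‖ : 𝕜) ^ 2)
    (x : X) : √(re (sip x x)) = ‖x‖ := by
  rw [hself, ← ofReal_pow, ofReal_re, Real.sqrt_sq (norm_nonneg x)]

section SemiInnerProduct

variable {𝕜 : Type*} [RCLike 𝕜] {X : Type*} [NormedAddCommGroup X] [NormedSpace 𝕜 X]

theorem exists_suppFunc {x : X} (hx : x ≠ 0) : ∃ φ : X →L[𝕜] 𝕜, SuppFunc 𝕜 x φ :=
  exists_dual_vector 𝕜 x (norm_ne_zero_iff.mpr hx)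

theorem SuppFunc.smul {x : X} {φ : X →L[𝕜] 𝕜} (h : SuppFunc 𝕜 x φ) {a : 𝕜} (ha : a ≠ 0) :
    SuppFunc 𝕜 (a • x) ((conj a / (‖a‖ : 𝕜)) • φ) := by
  have ha' : (‖a‖ : 𝕜) ≠ 0 := ofReal_ne_zero.mpr (norm_ne_zero_iff.mpr ha)
  constructor
  · rw [norm_smul, h.1, norm_div, norm_conj, norm_ofReal, abs_norm,
      div_self (norm_ne_zero_iff.mpr ha), one_mul]
  · rw [smul_apply, map_smul, h.2, norm_smul, smul_eq_mul, smul_eq_mul,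
      ofReal_mul, div_mul_eq_mul_div, div_eq_iff ha', ← mul_assoc, RCLike.conj_mul]
    ring

namespace IsCompatSIP

variable {sip : X → X → 𝕜}

/-- At `v = 0` the zero functional serves, so no case split is needed downstream. -/
theorem exists_dual (hsip : IsCompatSIP 𝕜 sip) (v : X) :
    ∃ φ : X →L[𝕜] 𝕜, ‖φ‖ ≤ 1 ∧ φ v = ‖v‖ ∧ ∀ u, sip u v = ‖v‖ * φ u := by
  rcases eq_or_ne v 0 with rfl | hv
  · exact ⟨0, by simp, by simp, fun u => by simp [hsip.1]⟩
  · obtain ⟨φ, hφ⟩ := exists_suppFunc (𝕜 := 𝕜) hv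
    exact ⟨φ, hφ.1.le, hφ.2, fun u => hsip.2 u v φ hφ⟩

theorem add_left (hsip : IsCompatSIP 𝕜 sip) (x y z : X) :
    sip (x + y) z = sip x z + sip y z := by
  obtain ⟨φ, -, -, hφ⟩ := hsip.exists_dual z
  rw [hφ, hφ, hφ, map_add, mul_add]

theorem smul_left (hsip : IsCompatSIP 𝕜 sip) (a : 𝕜) (x y : X) :
    sip (a • x) y = a * sip x y := by
  obtain ⟨φ, -, -, hφ⟩ := hsip.exists_dual y
  rw [hφ, hφ, map_smul, smul_eq_mul, mul_left_comm]

theorem smul_right (hsip : IsCompatSIP 𝕜 sip) (a : 𝕜) (x y : X) :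
    sip x (a • y) = conj a * sip x y := by
  rcases eq_or_ne a 0 with rfl | ha
  · simp [hsip.1]
  rcases eq_or_ne y 0 with rfl | hy
  · simp [hsip.1]
  obtain ⟨φ, hφ⟩ := exists_suppFunc (𝕜 := 𝕜) hy
  have ha' : (‖a‖ : 𝕜) ≠ 0 := ofReal_ne_zero.mpr (norm_ne_zero_iff.mpr ha)
  rw [hsip.2 x _ _ (hφ.smul ha), hsip.2 x y φ hφ, smul_apply, smul_eq_mul,
    norm_smul, ofReal_mul]
  field_simp

theorem self (hsip : IsCompatSIP 𝕜 sip) (x : X) : sip x x = (‖x‖ : 𝕜) ^ 2 := by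
  obtain ⟨φ, -, hφx, hφ⟩ := hsip.exists_dual x
  rw [hφ, hφx, sq]

theorem norm_le (hsip : IsCompatSIP 𝕜 sip) (x y : X) : ‖sip x y‖ ≤ ‖x‖ * ‖y‖ := by
  obtain ⟨φ, hφ1, -, hφ⟩ := hsip.exists_dual y
  calc ‖sip x y‖ = ‖y‖ * ‖φ x‖ := by rw [hφ, norm_mul, norm_ofReal, abs_norm]
    _ ≤ ‖y‖ * (1 * ‖x‖) := by gcongr; exact φ.le_of_opNorm_le hφ1 x
    _ = ‖x‖ * ‖y‖ := by ring

theorem isSIP (hsip : IsCompatSIP 𝕜 sip) : IsSIP 𝕜 sip := by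
  refine ⟨hsip.add_left, hsip.smul_left, hsip.smul_right, fun x hx => ?_, fun x y => ?_,
    hsip.self⟩
  · rw [hsip.self, ← ofReal_pow, ofReal_re, ofReal_im]
    exact ⟨by positivity, rfl⟩
  · rw [sqrt_re_self_eq_norm hsip.self, sqrt_re_self_eq_norm hsip.self]
    exact hsip.norm_le x y

end IsCompatSIP

namespace IsSIP

variable {sip : X → X → 𝕜}

theorem norm_le (h : IsSIP 𝕜 sip) (x y : X) : ‖sip x y‖ ≤ ‖x‖ * ‖y‖ := by
  simpa only [sqrt_re_self_eq_norm h.2.2.2.2.2] using h.2.2.2.2.1 x y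

def toDual (h : IsSIP 𝕜 sip) (v : X) : X →L[𝕜] 𝕜 :=
  LinearMap.mkContinuous
    { toFun := fun u => sip u v
      map_add' := fun x y => h.1 x y v
      map_smul' := fun a x => h.2.1 a x v }
    ‖v‖ fun u => (h.norm_le u v).trans_eq (mul_comm _ _)

theorem toDual_apply (h : IsSIP 𝕜 sip) (u v : X) : h.toDual v u = sip u v := rfl

theorem norm_toDual (h : IsSIP 𝕜 sip) (v : X) : ‖h.toDual v‖ = ‖v‖ := by
  refine le_antisymm (LinearMap.mkContinuous_norm_le _ (norm_nonneg v) _) ?_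
  rcases eq_or_ne v 0 with rfl | hv
  · simp
  calc ‖v‖ = ‖h.toDual v v‖ / ‖v‖ := by
        rw [toDual_apply, h.2.2.2.2.2, norm_pow, norm_ofReal, abs_norm, sq,
          mul_div_cancel_right₀ _ (norm_ne_zero_iff.mpr hv)]
    _ ≤ ‖h.toDual v‖ := (h.toDual v).ratio_le_opNorm v

theorem suppFunc_toDual (h : IsSIP 𝕜 sip) {v : X} (hv : v ≠ 0) :
    SuppFunc 𝕜 v (((‖v‖ : 𝕜)⁻¹) • h.toDual v) := by
  have hv' : ‖v‖ ≠ 0 := norm_ne_zero_iff.mpr hv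
  constructor
  · rw [norm_smul, norm_toDual, norm_inv, norm_ofReal, abs_norm, inv_mul_cancel₀ hv']
  · rw [smul_apply, toDual_apply, h.2.2.2.2.2, smul_eq_mul, sq,
      inv_mul_cancel_left₀ (ofReal_ne_zero.mpr hv')]

theorem apply_zero_right (h : IsSIP 𝕜 sip) (u : X) : sip u 0 = 0 := by
  simpa using h.2.2.1 0 u 0

end IsSIP

theorem IsCompatSIP.eq_of_isSIP {sip sip' : X → X → 𝕜} (hsip : IsCompatSIP 𝕜 sip)
    (h' : IsSIP 𝕜 sip') : sip' = sip := by
  funext u v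
  rcases eq_or_ne v 0 with rfl | hv
  · rw [h'.apply_zero_right, hsip.1]
  rw [hsip.2 u v _ (h'.suppFunc_toDual hv), smul_apply,
    IsSIP.toDual_apply, smul_eq_mul,
    mul_inv_cancel_left₀ (ofReal_ne_zero.mpr (norm_ne_zero_iff.mpr hv))]

end SemiInnerProduct

theorem stmt1_general {𝕜 : Type*} [RCLike 𝕜] {X : Type*} [NormedAddCommGroup X] [NormedSpace 𝕜 X]
    (sip : X → X → 𝕜) (hsip : IsCompatSIP 𝕜 sip) :
    IsSIP 𝕜 sip ∧ ∀ sip' : X → X → 𝕜, IsSIP 𝕜 sip' → sip' = sip :=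
  ⟨hsip.isSIP, fun _ h' => hsip.eq_of_isSIP h'⟩

theorem stmt1 {𝕜 : Type*} [RCLike 𝕜] {X : Type*} [NormedAddCommGroup X] [NormedSpace 𝕜 X]
    (hsm : NormSmooth 𝕜 X) (sip : X → X → 𝕜) (hsip : IsCompatSIP 𝕜 sip) :
    IsSIP 𝕜 sip ∧ ∀ sip' : X → X → 𝕜, IsSIP 𝕜 sip' → sip' = sip :=
  stmt1_general sip hsip
end

section
/- Let X be a smooth normed space with its unique compatible semi-inner product [·,·]. Then for x ≠ 0, x is Birkhoff–James orthogonal to y if and only if [y, x] = 0. -/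
open RCLike

/-! For a support functional `φ` at `x` one has `[y, x] = ‖x‖ φ y`. If `φ y = 0`, then
`‖x‖ = Re φ (x + λ y) ≤ ‖x + λ y‖`. Conversely (James), if `x ⊥ y` then `x` keeps its norm in the
quotient by the line `𝕜 y`; a Hahn–Banach norming functional of its class there, pulled back to
`X`, is a support functional at `x` vanishing at `y`. -/

section

variable {𝕜 : Type*} [RCLike 𝕜] {X : Type*} [NormedAddCommGroup X] [NormedSpace 𝕜 X]

theorem norm_mk_eq_of_forall_norm_le_norm_add {M : Type*} [SeminormedAddCommGroup M]
    {S : AddSubgroup M} {x : M} (h : ∀ s ∈ S, ‖x‖ ≤ ‖x + s‖) : ‖(x : M ⧸ S)‖ = ‖x‖ := by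
  refine le_antisymm QuotientAddGroup.norm_mk_le_norm (QuotientAddGroup.le_norm_iff.2 ?_)
  intro m hm
  simpa using h _ (QuotientAddGroup.eq.1 hm.symm)

theorem exists_suppFunc_of_forall_norm_le_norm_add (S : Submodule 𝕜 X) {x : X} (hx : x ≠ 0)
    (h : ∀ s ∈ S, ‖x‖ ≤ ‖x + s‖) : ∃ φ : X →L[𝕜] 𝕜, SuppFunc 𝕜 x φ ∧ ∀ s ∈ S, φ s = 0 := by
  have hmk : ‖S.mkQL x‖ = ‖x‖ := norm_mk_eq_of_forall_norm_le_norm_add (S := S.toAddSubgroup) h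
  obtain ⟨ψ, hψ, hψx⟩ := exists_dual_vector 𝕜 (S.mkQL x) (by rwa [hmk, norm_ne_zero_iff])
  have hφx : (ψ ∘L S.mkQL) x = ‖x‖ := by rw [ContinuousLinearMap.comp_apply, hψx, hmk]
  refine ⟨ψ ∘L S.mkQL, ⟨le_antisymm ?_ ?_, hφx⟩, fun s hs => ?_⟩
  · refine ContinuousLinearMap.opNorm_le_bound _ zero_le_one fun u => ?_
    calc ‖ψ (S.mkQL u)‖ ≤ ‖ψ‖ * ‖S.mkQL u‖ := ψ.le_opNorm _
      _ ≤ 1 * ‖u‖ := by rw [hψ]; gcongr; exact Submodule.Quotient.norm_mk_le S u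
  · have := (ψ ∘L S.mkQL).le_opNorm x
    rw [hφx, norm_ofReal, abs_norm] at this
    exact one_le_of_le_mul_right₀ (norm_pos_iff.2 hx) this
  · simp [(Submodule.Quotient.mk_eq_zero S).2 hs]

theorem exists_suppFunc_apply_eq_zero_of_bjOrth {x y : X} (hx : x ≠ 0) (h : BJOrth 𝕜 x y) :
    ∃ φ : X →L[𝕜] 𝕜, SuppFunc 𝕜 x φ ∧ φ y = 0 := by
  obtain ⟨φ, hφ, hφS⟩ := exists_suppFunc_of_forall_norm_le_norm_add (𝕜 ∙ y) hx <| by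
    intro s hs
    obtain ⟨a, rfl⟩ := Submodule.mem_span_singleton.1 hs
    exact h a
  exact ⟨φ, hφ, hφS y (Submodule.mem_span_singleton_self y)⟩

theorem bjOrth_of_suppFunc_apply_eq_zero {x y : X} {φ : X →L[𝕜] 𝕜} (hφ : SuppFunc 𝕜 x φ)
    (hy : φ y = 0) : BJOrth 𝕜 x y := fun a =>
  calc ‖x‖ = re (φ (x + a • y)) := by simp [hy, hφ.2]
    _ ≤ ‖φ (x + a • y)‖ := re_le_norm _
    _ ≤ ‖φ‖ * ‖x + a • y‖ := φ.le_opNorm _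
    _ = ‖x + a • y‖ := by rw [hφ.1, one_mul]

end

theorem stmt4_general {𝕜 : Type*} [RCLike 𝕜] {X : Type*} [NormedAddCommGroup X] [NormedSpace 𝕜 X]
    (sip : X → X → 𝕜) (hsip : IsCompatSIP 𝕜 sip)
    (x y : X) (hx : x ≠ 0) :
    BJOrth 𝕜 x y ↔ sip y x = 0 := by
  constructor
  · intro h
    obtain ⟨φ, hφ, hφy⟩ := exists_suppFunc_apply_eq_zero_of_bjOrth hx h
    rw [hsip.2 y x φ hφ, hφy, mul_zero]
  · intro h
    obtain ⟨φ, hφ⟩ := exists_dual_vector 𝕜 x (norm_ne_zero_iff.2 hx)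
    rw [hsip.2 y x φ hφ, mul_eq_zero, ofReal_eq_zero, norm_eq_zero] at h
    exact bjOrth_of_suppFunc_apply_eq_zero hφ (h.resolve_left hx)

theorem stmt4 {𝕜 : Type*} [RCLike 𝕜] {X : Type*} [NormedAddCommGroup X] [NormedSpace 𝕜 X]
    (hsm : NormSmooth 𝕜 X) (sip : X → X → 𝕜) (hsip : IsCompatSIP 𝕜 sip)
    (x y : X) (hx : x ≠ 0) :
    BJOrth 𝕜 x y ↔ sip y x = 0 :=
  stmt4_general sip hsip x y hx
end

section
/- There exists a semi-inner product [·,·] on the real space ℓ∞² (ℝ² with the sup norm) compatible with the norm, and a linear surjective isometry T of ℓ∞², such that |[Tx, Ty]| ≠ |[x, y]| for some x, y. Concretely, with [x,y] = x₁y₁ if |y₁|>|y₂|, x₂y₂ if |y₁|<|y₂|, and (3/4)x₁y₁+(1/4)x₂y₂ if |y₁|=|y₂|, and T(x₁,x₂)=(x₂,x₁), one has [(1,0),(1,1)] = 3/4 while [T(1,0),T(1,1)] = 1/4. -/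
open RCLike

noncomputable def mySip (x y : ℝ × ℝ) : ℝ :=
  if |y.1| > |y.2| then x.1 * y.1
  else if |y.1| < |y.2| then x.2 * y.2
  else 3 / 4 * (x.1 * y.1) + 1 / 4 * (x.2 * y.2)

lemma mySip_self (x : ℝ × ℝ) : mySip x x = ‖x‖ ^ 2 := by
  unfold mySip
  rw [Prod.norm_def]
  simp only [Real.norm_eq_abs]
  rcases lt_trichotomy (|x.1|) (|x.2|) with h | h | h
  · rw [if_neg (by linarith), if_pos h, max_eq_right h.le, sq_abs]; ring
  · rw [if_neg (by linarith), if_neg (by linarith), max_eq_right h.le, sq_abs]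
    have h1 : x.1 ^ 2 = x.2 ^ 2 := by rw [← sq_abs, ← sq_abs x.2, h]
    nlinarith [h1]
  · rw [if_pos h, max_eq_left h.le, sq_abs]; ring

lemma mySip_cs (x y : ℝ × ℝ) : |mySip x y| ≤ ‖x‖ * ‖y‖ := by
  unfold mySip
  rw [Prod.norm_def, Prod.norm_def]
  simp only [Real.norm_eq_abs]
  have h1 : |x.1| ≤ max |x.1| |x.2| := le_max_left _ _
  have h2 : |x.2| ≤ max |x.1| |x.2| := le_max_right _ _
  have h3 : |y.1| ≤ max |y.1| |y.2| := le_max_left _ _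
  have h4 : |y.2| ≤ max |y.1| |y.2| := le_max_right _ _
  have h0 : (0:ℝ) ≤ max |x.1| |x.2| := le_trans (abs_nonneg _) h1
  have e1 : |x.1 * y.1| ≤ max |x.1| |x.2| * max |y.1| |y.2| := by
    rw [abs_mul]; exact mul_le_mul h1 h3 (abs_nonneg _) h0
  have e2 : |x.2 * y.2| ≤ max |x.1| |x.2| * max |y.1| |y.2| := by
    rw [abs_mul]; exact mul_le_mul h2 h4 (abs_nonneg _) h0
  split_ifs with ha hb
  · exact e1
  · exact e2
  · have habs : |3 / 4 * (x.1 * y.1) + 1 / 4 * (x.2 * y.2)| ≤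
        3 / 4 * |x.1 * y.1| + 1 / 4 * |x.2 * y.2| := by
      calc |3 / 4 * (x.1 * y.1) + 1 / 4 * (x.2 * y.2)|
          ≤ |3 / 4 * (x.1 * y.1)| + |1 / 4 * (x.2 * y.2)| := abs_add_le _ _
        _ = 3 / 4 * |x.1 * y.1| + 1 / 4 * |x.2 * y.2| := by
            norm_num [abs_mul, abs_div]
    linarith [e1, e2]

theorem stmt5 :
    ∃ sip : (ℝ × ℝ) → (ℝ × ℝ) → ℝ, IsSIP ℝ sip ∧
      (∀ x y : ℝ × ℝ,
        (|y.1| > |y.2| → sip x y = x.1 * y.1) ∧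
        (|y.1| < |y.2| → sip x y = x.2 * y.2) ∧
        (|y.1| = |y.2| → sip x y = 3 / 4 * (x.1 * y.1) + 1 / 4 * (x.2 * y.2))) ∧
      ∃ T : (ℝ × ℝ) ≃ₗᵢ[ℝ] (ℝ × ℝ),
        (∀ p : ℝ × ℝ, T p = (p.2, p.1)) ∧
        sip ((1 : ℝ), (0 : ℝ)) ((1 : ℝ), (1 : ℝ)) = 3 / 4 ∧
        sip (T ((1 : ℝ), (0 : ℝ))) (T ((1 : ℝ), (1 : ℝ))) = 1 / 4 ∧
        |sip (T ((1 : ℝ), (0 : ℝ))) (T ((1 : ℝ), (1 : ℝ)))| ≠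
          |sip ((1 : ℝ), (0 : ℝ)) ((1 : ℝ), (1 : ℝ))| := by
  classical
  refine ⟨mySip, ⟨?_, ?_, ?_, ?_, ?_, ?_⟩, ?_, ?_⟩
  · intro x y z
    unfold mySip
    split_ifs <;> ring_nf <;> simp [Prod.fst_add, Prod.snd_add] <;> ring
  · intro a x y
    unfold mySip
    split_ifs <;> simp [Prod.smul_fst, Prod.smul_snd, smul_eq_mul] <;> ring
  · intro a x y
    rcases eq_or_ne a 0 with rfl | ha
    · simp [mySip]
    · unfold mySip
      have h1 : |(a • y).1| = |a| * |y.1| := by simp [abs_mul]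
      have h2 : |(a • y).2| = |a| * |y.2| := by simp [abs_mul]
      have hap : 0 < |a| := abs_pos.mpr ha
      simp only [h1, h2, gt_iff_lt, mul_lt_mul_iff_right₀ hap]
      have hfst : (a • y).1 = a * y.1 := rfl
      have hsnd : (a • y).2 = a * y.2 := rfl
      split_ifs <;> simp [hfst, hsnd, starRingEnd_apply] <;> ring
  · intro x hx
    have h := mySip_self x
    have hn : 0 < ‖x‖ := norm_pos_iff.mpr hx
    constructor
    · simp only [RCLike.re_to_real]
      rw [h]; positivity
    · simp
  · intro x y
    simp only [RCLike.re_to_real, mySip_self]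
    rw [Real.sqrt_sq (norm_nonneg x), Real.sqrt_sq (norm_nonneg y), Real.norm_eq_abs]
    exact mySip_cs x y
  · intro x
    exact mySip_self x
  · intro x y
    refine ⟨?_, ?_, ?_⟩
    · intro h; unfold mySip; rw [if_pos h]
    · intro h; unfold mySip; rw [if_neg (by linarith), if_pos h]
    · intro h; unfold mySip; rw [if_neg (by simp [h]), if_neg (by simp [h])]
  · refine ⟨⟨LinearEquiv.prodComm ℝ ℝ ℝ, ?_⟩, fun p => rfl, ?_, ?_, ?_⟩
    · intro p
      simp [Prod.norm_def, max_comm]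
    · show mySip _ _ = _
      norm_num [mySip]
    · show mySip _ _ = _
      norm_num [mySip]
    · show |mySip _ _| ≠ |mySip _ _|
      norm_num [mySip, abs_div]
end

section
/- Let X and Y be smooth normed spaces over 𝔽 with unique compatible semi-inner products, and let f : X → Y be a surjective map satisfying |[f(x), f(y)]| = |[x, y]| for all x, y ∈ X. Then for all linearly independent x, y ∈ X there exist scalars α, β ∈ 𝔽 with |α| = |β| = 1 such that f(x + y) = α f(x) + β f(y). -/
/-!
For a support functional `φ` at `v ≠ 0`, `[u, v] = ‖v‖ φ u`. Hence `|[f u, f v]| = |[u, v]|`,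
together with `‖f v‖ = ‖v‖`, says that `|φ' ∘ f| = |φ|` for any support functionals `φ` at `v`
and `φ'` at `f v`; by surjectivity every support functional of `Y` arises as such a `φ'`. Support
functionals separate a point from a finite-dimensional subspace (norm attainment in finite
dimension, then Hahn–Banach). If `f (x + y)` were outside `span {f x, f y}`, pulling back a
separating support functional would give a linear functional vanishing at `x` and `y` but not at
`x + y`. Writing `f (x + y) = α f x + β f y` and pushing forward a support functional of `X` that
kills `y` but not `x` gives `|α| = 1`; symmetrically `|β| = 1`.
-/

open RCLike

theorem notMem_span_singleton_of_linearIndependent_pair {K V : Type*} [Field K] [AddCommGroup V]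
    [Module K V] {x y : V} (h : LinearIndependent K ![x, y]) : x ∉ K ∙ y := by
  simpa using (linearIndependent_finCons.1 h).2

section SupportFunctional

variable {𝕜 : Type*} [RCLike 𝕜] {E : Type*} [NormedAddCommGroup E] [NormedSpace 𝕜 E]

theorem ContinuousLinearMap.exists_norm_apply_eq_opNorm [FiniteDimensional 𝕜 E] [Nontrivial E]
    {F : Type*} [NormedAddCommGroup F] [NormedSpace 𝕜 F] (f : E →L[𝕜] F) :
    ∃ w : E, ‖w‖ = 1 ∧ ‖f w‖ = ‖f‖ := by
  have := FiniteDimensional.proper_rclike 𝕜 E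
  obtain ⟨w, hw, hmax⟩ := (isCompact_sphere (0 : E) 1).exists_isMaxOn
    (Set.nonempty_coe_sort.1 (NormedSpace.sphere_nonempty_rclike 𝕜 zero_le_one))
    (continuous_norm.comp f.continuous).continuousOn
  rw [mem_sphere_zero_iff_norm] at hw
  refine ⟨w, hw, le_antisymm (by simpa [hw] using f.le_opNorm w) ?_⟩
  exact f.opNorm_le_of_unit_norm (norm_nonneg _) fun x hx => hmax (mem_sphere_zero_iff_norm.2 hx)

theorem exists_suppFunc_smul [FiniteDimensional 𝕜 E] {ψ : E →L[𝕜] 𝕜} (hψ : ψ ≠ 0) :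
    ∃ (w : E) (c : 𝕜), w ≠ 0 ∧ c ≠ 0 ∧ SuppFunc 𝕜 w (c • ψ) := by
  obtain ⟨u, hu⟩ := DFunLike.ne_iff.1 hψ
  have : Nontrivial E := ⟨⟨u, 0, fun h => hu (by simp [h])⟩⟩
  obtain ⟨w, hw, hψw⟩ := ψ.exists_norm_apply_eq_opNorm
  have hψw0 : ψ w ≠ 0 := by rwa [← norm_ne_zero_iff, hψw, norm_ne_zero_iff]
  refine ⟨w, (ψ w)⁻¹, norm_ne_zero_iff.1 (by simp [hw]), inv_ne_zero hψw0, ?_, ?_⟩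
  · rw [norm_smul, norm_inv, hψw, inv_mul_cancel₀ (by simpa using hψ)]
  · simp [hw, hψw0]

theorem SuppFunc.exists_extension {p : Submodule 𝕜 E} {w : p} {φ : p →L[𝕜] 𝕜}
    (h : SuppFunc 𝕜 w φ) : ∃ Φ : E →L[𝕜] 𝕜, SuppFunc 𝕜 (w : E) Φ ∧ ∀ x : p, Φ x = φ x := by
  obtain ⟨Φ, hΦφ, hΦ⟩ := exists_extension_norm_eq p φ
  exact ⟨Φ, ⟨hΦ.trans h.1, (hΦφ w).trans h.2⟩, hΦφ⟩

theorem exists_suppFunc_separating (M : Submodule 𝕜 E) [FiniteDimensional 𝕜 M] {z : E}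
    (hz : z ∉ M) :
    ∃ (w : E) (φ : E →L[𝕜] 𝕜), w ≠ 0 ∧ SuppFunc 𝕜 w φ ∧ (∀ m ∈ M, φ m = 0) ∧ φ z ≠ 0 := by
  -- `N` is finite-dimensional, so a functional on it separating `z` from `M` attains its norm.
  set N := M ⊔ 𝕜 ∙ z
  have hMN : M ≤ N := le_sup_left
  have hzN : z ∈ N := Submodule.mem_sup_right (Submodule.mem_span_singleton_self z)
  obtain ⟨g, hgz, hgM⟩ := (M.comap N.subtype).exists_dual_map_eq_bot_of_notMem
    (x := ⟨z, hzN⟩) hz inferInstance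
  have hg0 : LinearMap.toContinuousLinearMap g ≠ 0 := fun h =>
    hgz (by simp [← LinearMap.coe_toContinuousLinearMap', h])
  obtain ⟨w, c, hw, hc, hcg⟩ := exists_suppFunc_smul hg0
  obtain ⟨Φ, hΦ, hΦg⟩ := hcg.exists_extension
  refine ⟨w, Φ, by simpa using hw, hΦ, fun m hm => ?_, ?_⟩
  · have hgm : g ⟨m, hMN hm⟩ = 0 := (Submodule.eq_bot_iff _).1 hgM _
      (Submodule.mem_map_of_mem (show ⟨m, hMN hm⟩ ∈ M.comap N.subtype from hm))
    simpa [hgm] using hΦg ⟨m, hMN hm⟩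
  · simpa [hΦg ⟨z, hzN⟩] using ⟨hc, hgz⟩

end SupportFunctional

section SemiInnerProduct

variable {𝕜 : Type*} [RCLike 𝕜] {X Y : Type*} [NormedAddCommGroup X] [NormedSpace 𝕜 X]
  [NormedAddCommGroup Y] [NormedSpace 𝕜 Y]

theorem IsCompatSIP.norm_apply {sip : X → X → 𝕜} (h : IsCompatSIP 𝕜 sip) {v : X}
    {φ : X →L[𝕜] 𝕜} (hφ : SuppFunc 𝕜 v φ) (u : X) : ‖sip u v‖ = ‖v‖ * ‖φ u‖ := by
  rw [h.2 u v φ hφ, norm_mul, norm_ofReal, abs_norm]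

theorem IsCompatSIP.norm_apply_self {sip : X → X → 𝕜} (h : IsCompatSIP 𝕜 sip) (v : X) :
    ‖sip v v‖ = ‖v‖ ^ 2 := by
  rcases eq_or_ne v 0 with rfl | hv
  · simp [h.1]
  · obtain ⟨φ, hφ⟩ := exists_dual_vector 𝕜 v (norm_ne_zero_iff.2 hv)
    rw [h.norm_apply hφ, hφ.2, norm_ofReal, abs_norm, sq]

variable {sipX : X → X → 𝕜} {sipY : Y → Y → 𝕜} {f : X → Y}

theorem norm_map_eq_of_norm_sip_map_eq (hX : IsCompatSIP 𝕜 sipX) (hY : IsCompatSIP 𝕜 sipY)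
    (hf : ∀ x y : X, ‖sipY (f x) (f y)‖ = ‖sipX x y‖) (u : X) : ‖f u‖ = ‖u‖ := by
  have h := hf u u
  rw [hY.norm_apply_self, hX.norm_apply_self] at h
  exact (pow_left_inj₀ (norm_nonneg _) (norm_nonneg _) two_ne_zero).1 h

theorem norm_suppFunc_apply_map_eq (hX : IsCompatSIP 𝕜 sipX) (hY : IsCompatSIP 𝕜 sipY)
    (hf : ∀ x y : X, ‖sipY (f x) (f y)‖ = ‖sipX x y‖) {v : X} (hv : v ≠ 0)
    {ψ : X →L[𝕜] 𝕜} (hψ : SuppFunc 𝕜 v ψ) {φ : Y →L[𝕜] 𝕜} (hφ : SuppFunc 𝕜 (f v) φ) (u : X) :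
    ‖φ (f u)‖ = ‖ψ u‖ := by
  have h := hf u v
  rw [hY.norm_apply hφ, hX.norm_apply hψ, norm_map_eq_of_norm_sip_map_eq hX hY hf] at h
  exact mul_left_cancel₀ (norm_ne_zero_iff.2 hv) h

theorem exists_norm_apply_map_eq_norm_apply (hX : IsCompatSIP 𝕜 sipX) (hY : IsCompatSIP 𝕜 sipY)
    (hf : ∀ x y : X, ‖sipY (f x) (f y)‖ = ‖sipX x y‖) {v : X} (hv : v ≠ 0)
    {ψ : X →L[𝕜] 𝕜} (hψ : SuppFunc 𝕜 v ψ) : ∃ φ : Y →L[𝕜] 𝕜, ∀ u, ‖φ (f u)‖ = ‖ψ u‖ := by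
  have hfv : ‖f v‖ ≠ 0 := by
    rw [norm_map_eq_of_norm_sip_map_eq hX hY hf]; exact norm_ne_zero_iff.2 hv
  obtain ⟨φ, hφ⟩ := exists_dual_vector 𝕜 (f v) hfv
  exact ⟨φ, norm_suppFunc_apply_map_eq hX hY hf hv hψ hφ⟩

theorem exists_norm_apply_eq_norm_apply_map (hX : IsCompatSIP 𝕜 sipX) (hY : IsCompatSIP 𝕜 sipY)
    (hf : ∀ x y : X, ‖sipY (f x) (f y)‖ = ‖sipX x y‖) (hsurj : Function.Surjective f) {w : Y}
    (hw : w ≠ 0) {φ : Y →L[𝕜] 𝕜} (hφ : SuppFunc 𝕜 w φ) :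
    ∃ ψ : X →L[𝕜] 𝕜, ∀ u, ‖ψ u‖ = ‖φ (f u)‖ := by
  obtain ⟨v, rfl⟩ := hsurj w
  have hv : v ≠ 0 := by
    rw [← norm_ne_zero_iff, ← norm_map_eq_of_norm_sip_map_eq hX hY hf]; exact norm_ne_zero_iff.2 hw
  obtain ⟨ψ, hψ⟩ := exists_dual_vector 𝕜 v (norm_ne_zero_iff.2 hv)
  exact ⟨ψ, fun u => (norm_suppFunc_apply_map_eq hX hY hf hv hψ hφ u).symm⟩

theorem map_add_mem_span_pair (hX : IsCompatSIP 𝕜 sipX) (hY : IsCompatSIP 𝕜 sipY)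
    (hf : ∀ x y : X, ‖sipY (f x) (f y)‖ = ‖sipX x y‖) (hsurj : Function.Surjective f) (x y : X) :
    f (x + y) ∈ Submodule.span 𝕜 {f x, f y} := by
  by_contra h
  have : FiniteDimensional 𝕜 (Submodule.span 𝕜 {f x, f y}) :=
    FiniteDimensional.span_of_finite 𝕜 (Set.toFinite _)
  obtain ⟨w, φ, hw, hφ, hφM, hφxy⟩ := exists_suppFunc_separating _ h
  obtain ⟨ψ, hψ⟩ := exists_norm_apply_eq_norm_apply_map hX hY hf hsurj hw hφ
  have hψ0 : ∀ u, f u ∈ Submodule.span 𝕜 {f x, f y} → ψ u = 0 := fun u hu => by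
    rw [← norm_eq_zero, hψ, hφM _ hu, norm_zero]
  apply hφxy
  rw [← norm_eq_zero, ← hψ, map_add, hψ0 x (Submodule.subset_span (by simp)),
    hψ0 y (Submodule.subset_span (by simp)), add_zero, norm_zero]

theorem norm_eq_one_of_map_add_eq (hX : IsCompatSIP 𝕜 sipX) (hY : IsCompatSIP 𝕜 sipY)
    (hf : ∀ x y : X, ‖sipY (f x) (f y)‖ = ‖sipX x y‖) {x y : X} (hxy : x ∉ 𝕜 ∙ y) {α β : 𝕜}
    (h : f (x + y) = α • f x + β • f y) : ‖α‖ = 1 := by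
  obtain ⟨v, ψ, hv, hψ, hψy, hψx⟩ := exists_suppFunc_separating (𝕜 ∙ y) hxy
  obtain ⟨φ, hφ⟩ := exists_norm_apply_map_eq_norm_apply hX hY hf hv hψ
  have hφy : φ (f y) = 0 := by
    rw [← norm_eq_zero, hφ, hψy y (Submodule.mem_span_singleton_self y), norm_zero]
  have hφx : ‖φ (f x)‖ ≠ 0 := by rw [hφ]; exact norm_ne_zero_iff.2 hψx
  have key : ‖α‖ * ‖φ (f x)‖ = ‖φ (f x)‖ := calc
    ‖α‖ * ‖φ (f x)‖ = ‖φ (f (x + y))‖ := by simp [h, hφy]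
    _ = ‖φ (f x)‖ := by
      rw [hφ, hφ, map_add, hψy y (Submodule.mem_span_singleton_self y), add_zero]
  exact mul_eq_right₀ hφx |>.1 key

end SemiInnerProduct

theorem stmt8_general {𝕜 : Type*} [RCLike 𝕜] {X Y : Type*} [NormedAddCommGroup X] [NormedSpace 𝕜 X]
    [NormedAddCommGroup Y] [NormedSpace 𝕜 Y]
    (sipX : X → X → 𝕜) (hX : IsCompatSIP 𝕜 sipX)
    (sipY : Y → Y → 𝕜) (hY : IsCompatSIP 𝕜 sipY)
    (f : X → Y) (hsurj : Function.Surjective f)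
    (hf : ∀ x y : X, ‖sipY (f x) (f y)‖ = ‖sipX x y‖) :
    ∀ x y : X, LinearIndependent 𝕜 ![x, y] →
      ∃ α β : 𝕜, ‖α‖ = 1 ∧ ‖β‖ = 1 ∧ f (x + y) = α • f x + β • f y := by
  intro x y hxy
  obtain ⟨α, β, hαβ⟩ := Submodule.mem_span_pair.1 (map_add_mem_span_pair hX hY hf hsurj x y)
  refine ⟨α, β, norm_eq_one_of_map_add_eq hX hY hf ?_ hαβ.symm,
    norm_eq_one_of_map_add_eq hX hY hf ?_ (by rw [add_comm, ← hαβ, add_comm]), hαβ.symm⟩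
  · exact notMem_span_singleton_of_linearIndependent_pair hxy
  · exact notMem_span_singleton_of_linearIndependent_pair (LinearIndependent.pair_symm_iff.1 hxy)

theorem stmt8 {𝕜 : Type*} [RCLike 𝕜] {X Y : Type*} [NormedAddCommGroup X] [NormedSpace 𝕜 X]
    [NormedAddCommGroup Y] [NormedSpace 𝕜 Y]
    (hsmX : NormSmooth 𝕜 X) (hsmY : NormSmooth 𝕜 Y)
    (sipX : X → X → 𝕜) (hX : IsCompatSIP 𝕜 sipX)
    (sipY : Y → Y → 𝕜) (hY : IsCompatSIP 𝕜 sipY)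
    (f : X → Y) (hsurj : Function.Surjective f)
    (hf : ∀ x y : X, ‖sipY (f x) (f y)‖ = ‖sipX x y‖) :
    ∀ x y : X, LinearIndependent 𝕜 ![x, y] →
      ∃ α β : 𝕜, ‖α‖ = 1 ∧ ‖β‖ = 1 ∧ f (x + y) = α • f x + β • f y :=
  stmt8_general sipX hX sipY hY f hsurj hf
end

section
/- Let X and Y be smooth normed spaces over 𝔽 with unique compatible semi-inner products, and let f : X → Y be surjective with |[f(x), f(y)]| = |[x, y]| for all x, y. Then f maps one-dimensional subspaces to one-dimensional subspaces: the map ⟨x⟩ ↦ ⟨f(x)⟩ is a well-defined surjection from the projective space of X to the projective space of Y. -/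
open RCLike

/-!
Taking `y = x` shows that `f` preserves norms. For a support functional `φ` at `f z` we have
`[u, f z] = ‖f z‖ φ u`, so `|[f (c x), f z]| = |c| |[f x, f z]|` reads
`|φ (f (c x))| = |c| |φ (f x)|`; by surjectivity this holds for support functionals at every
point of `Y`. If `f (c x)` and `f x` were independent, the functional on their span vanishing on
`f x` attains its norm (the span is finite-dimensional), and a Hahn–Banach extension rescaled at
that point is a support functional killing `f x` but not `f (c x)`, which is absurd.
-/

theorem ContinuousLinearMap.exists_ne_zero_norm_apply_eq_opNorm_mul {𝕜 : Type*} [RCLike 𝕜]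
    {Z : Type*} [NormedAddCommGroup Z] [NormedSpace 𝕜 Z] [FiniteDimensional 𝕜 Z]
    (g : Z →L[𝕜] 𝕜) (hg : g ≠ 0) : ∃ z ≠ 0, ‖g z‖ = ‖g‖ * ‖z‖ := by
  have : ProperSpace Z := FiniteDimensional.proper 𝕜 Z
  obtain ⟨z, hz, hgz⟩ := (isCompact_closedBall (0 : Z) 1).exists_sSup_image_eq
    ⟨0, by simp⟩ (by fun_prop : Continuous fun x => ‖g x‖).continuousOn
  rw [g.sSup_unitClosedBall_eq_norm] at hgz
  have hz0 : z ≠ 0 := by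
    rintro rfl
    exact hg (norm_eq_zero.mp (by simpa using hgz))
  refine ⟨z, hz0, le_antisymm (g.le_opNorm z) ?_⟩
  calc ‖g‖ * ‖z‖ ≤ ‖g‖ := mul_le_of_le_one_right (norm_nonneg g) (mem_closedBall_zero_iff.mp hz)
    _ = ‖g z‖ := hgz

theorem suppFunc_smul_of_norm_apply_eq {𝕜 : Type*} [RCLike 𝕜] {Y : Type*}
    [NormedAddCommGroup Y] [NormedSpace 𝕜 Y] {G : Y →L[𝕜] 𝕜} {w : Y}
    (hGw : G w ≠ 0) (hnorm : ‖G w‖ = ‖G‖ * ‖w‖) :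
    SuppFunc 𝕜 w (((‖w‖ : 𝕜) / G w) • G) := by
  have hG : ‖G‖ ≠ 0 := fun h => hGw (by simpa [h] using hnorm)
  have hw : ‖w‖ ≠ 0 := fun h => hGw (by simpa [h] using hnorm)
  constructor
  · rw [norm_smul, norm_div, norm_ofReal, abs_norm, hnorm]
    field_simp
  · rw [smul_apply, smul_eq_mul, div_mul_cancel₀ _ hGw]

theorem exists_suppFunc_apply_ne_zero_apply_eq_zero {𝕜 : Type*} [RCLike 𝕜] {Y : Type*}
    [NormedAddCommGroup Y] [NormedSpace 𝕜 Y] {u v : Y} (huv : LinearIndependent 𝕜 ![u, v]) :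
    ∃ w ≠ 0, ∃ φ : Y →L[𝕜] 𝕜, SuppFunc 𝕜 w φ ∧ φ u ≠ 0 ∧ φ v = 0 := by
  set b := Module.Basis.span huv
  have := Module.Finite.of_basis b
  let g : _ →L[𝕜] 𝕜 := LinearMap.toContinuousLinearMap (b.coord 0)
  have hg0 : g (b 0) = 1 := by simp [g]
  have hg1 : g (b 1) = 0 := by simp [g]
  have hg : g ≠ 0 := fun h => by simp [h] at hg0
  obtain ⟨z, hz, hgz⟩ := g.exists_ne_zero_norm_apply_eq_opNorm_mul hg
  obtain ⟨G, hGg, hGnorm⟩ := exists_extension_norm_eq _ g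
  have hGz : G z ≠ 0 := by
    rw [hGg, ← norm_ne_zero_iff, hgz]
    exact mul_ne_zero (norm_ne_zero_iff.mpr hg) (norm_ne_zero_iff.mpr hz)
  have hGu : G u = 1 := by
    rw [← hg0, ← hGg]
    exact congrArg G (congrArg Subtype.val (Module.Basis.span_apply huv 0)).symm
  have hGv : G v = 0 := by
    rw [← hg1, ← hGg]
    exact congrArg G (congrArg Subtype.val (Module.Basis.span_apply huv 1)).symm
  refine ⟨z, by simpa using hz, _, suppFunc_smul_of_norm_apply_eq hGz ?_, ?_, ?_⟩
  · rw [hGg, hGnorm, hgz, Submodule.norm_coe]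
  · rw [smul_apply, hGu, smul_eq_mul, mul_one]
    exact div_ne_zero (by simpa using hz) hGz
  · rw [smul_apply, hGv, smul_zero]

namespace IsCompatSIP

variable {𝕜 X : Type*} [RCLike 𝕜] [NormedAddCommGroup X] [NormedSpace 𝕜 X] {sip : X → X → 𝕜}

theorem norm_apply_self_s10 (h : IsCompatSIP 𝕜 sip) (z : X) : ‖sip z z‖ = ‖z‖ ^ 2 := by
  rcases eq_or_ne z 0 with rfl | hz
  · simp [h.1]
  · obtain ⟨φ, hφ⟩ := exists_dual_vector 𝕜 z (norm_ne_zero_iff.mpr hz)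
    rw [h.2 z z φ hφ, hφ.2, norm_mul, norm_ofReal, abs_norm, sq]

theorem apply_smul_left (h : IsCompatSIP 𝕜 sip) (c : 𝕜) (x z : X) :
    sip (c • x) z = c * sip x z := by
  rcases eq_or_ne z 0 with rfl | hz
  · simp [h.1]
  · obtain ⟨φ, hφ⟩ := exists_dual_vector 𝕜 z (norm_ne_zero_iff.mpr hz)
    rw [h.2 _ z φ hφ, h.2 x z φ hφ, map_smul, smul_eq_mul, mul_left_comm]

end IsCompatSIP

section SipIsometry

variable {𝕜 X Y : Type*} [RCLike 𝕜] [NormedAddCommGroup X] [NormedSpace 𝕜 X]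
  [NormedAddCommGroup Y] [NormedSpace 𝕜 Y] {sipX : X → X → 𝕜} {sipY : Y → Y → 𝕜} {f : X → Y}

theorem norm_map_of_norm_sip_map (hX : IsCompatSIP 𝕜 sipX) (hY : IsCompatSIP 𝕜 sipY)
    (hf : ∀ x y : X, ‖sipY (f x) (f y)‖ = ‖sipX x y‖) (x : X) : ‖f x‖ = ‖x‖ := by
  have hsq : ‖f x‖ ^ 2 = ‖x‖ ^ 2 := by
    rw [← hY.norm_apply_self_s10, hf, hX.norm_apply_self_s10]
  exact (pow_left_inj₀ (norm_nonneg _) (norm_nonneg _) two_ne_zero).mp hsq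

theorem map_eq_zero_iff_of_norm_sip_map (hX : IsCompatSIP 𝕜 sipX) (hY : IsCompatSIP 𝕜 sipY)
    (hf : ∀ x y : X, ‖sipY (f x) (f y)‖ = ‖sipX x y‖) {x : X} : f x = 0 ↔ x = 0 := by
  rw [← norm_eq_zero, norm_map_of_norm_sip_map hX hY hf, norm_eq_zero]

theorem norm_suppFunc_apply_map_smul (hX : IsCompatSIP 𝕜 sipX) (hY : IsCompatSIP 𝕜 sipY)
    (hf : ∀ x y : X, ‖sipY (f x) (f y)‖ = ‖sipX x y‖) (hsurj : Function.Surjective f)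
    {w : Y} (hw : w ≠ 0) {φ : Y →L[𝕜] 𝕜} (hφ : SuppFunc 𝕜 w φ) (c : 𝕜) (x : X) :
    ‖φ (f (c • x))‖ = ‖c‖ * ‖φ (f x)‖ := by
  obtain ⟨z, rfl⟩ := hsurj w
  have hsip : ∀ x' : X, ‖sipX x' z‖ = ‖f z‖ * ‖φ (f x')‖ := fun x' => by
    rw [← hf, hY.2 _ _ φ hφ, norm_mul, norm_ofReal, abs_norm]
  have hfz : ‖f z‖ ≠ 0 := norm_ne_zero_iff.mpr hw
  apply mul_left_cancel₀ hfz
  rw [← hsip, hX.apply_smul_left, norm_mul, hsip, mul_left_comm]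

theorem exists_map_smul_eq_smul_map (hX : IsCompatSIP 𝕜 sipX) (hY : IsCompatSIP 𝕜 sipY)
    (hf : ∀ x y : X, ‖sipY (f x) (f y)‖ = ‖sipX x y‖) (hsurj : Function.Surjective f)
    {x : X} (hx : x ≠ 0) {c : 𝕜} (hc : c ≠ 0) : ∃ γ : 𝕜, γ ≠ 0 ∧ f (c • x) = γ • f x := by
  have hf0 : ∀ {x : X}, x ≠ 0 → f x ≠ 0 := (map_eq_zero_iff_of_norm_sip_map hX hY hf).not.mpr
  by_contra hdep
  have hli : LinearIndependent 𝕜 ![f (c • x), f x] := by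
    refine linearIndependent_fin2.mpr ⟨hf0 hx, fun γ hγ => hdep ⟨γ, ?_, hγ.symm⟩⟩
    rintro rfl
    exact hf0 (smul_ne_zero hc hx) (by simpa using hγ.symm)
  obtain ⟨w, hw, φ, hφ, hφu, hφv⟩ := exists_suppFunc_apply_ne_zero_apply_eq_zero hli
  have := norm_suppFunc_apply_map_smul hX hY hf hsurj hw hφ c x
  rw [hφv, norm_zero, mul_zero, norm_eq_zero] at this
  exact hφu this

end SipIsometry

theorem stmt10_general {𝕜 : Type*} [RCLike 𝕜] {X Y : Type*} [NormedAddCommGroup X] [NormedSpace 𝕜 X]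
    [NormedAddCommGroup Y] [NormedSpace 𝕜 Y]
    (sipX : X → X → 𝕜) (hX : IsCompatSIP 𝕜 sipX)
    (sipY : Y → Y → 𝕜) (hY : IsCompatSIP 𝕜 sipY)
    (f : X → Y) (hsurj : Function.Surjective f)
    (hf : ∀ x y : X, ‖sipY (f x) (f y)‖ = ‖sipX x y‖) :
    (∀ x : X, x ≠ 0 → f x ≠ 0) ∧
    (∀ x : X, x ≠ 0 → ∀ c : 𝕜, c ≠ 0 → ∃ γ : 𝕜, γ ≠ 0 ∧ f (c • x) = γ • f x) ∧
    (∀ w : Y, w ≠ 0 → ∃ x : X, x ≠ 0 ∧ ∃ γ : 𝕜, γ ≠ 0 ∧ f x = γ • w) := by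
  have hf0 : ∀ {x : X}, f x = 0 ↔ x = 0 := map_eq_zero_iff_of_norm_sip_map hX hY hf
  refine ⟨fun x => hf0.not.mpr, fun x hx c hc => exists_map_smul_eq_smul_map hX hY hf hsurj hx hc,
    fun w hw => ?_⟩
  obtain ⟨x, rfl⟩ := hsurj w
  exact ⟨x, hf0.not.mp hw, 1, one_ne_zero, (one_smul 𝕜 (f x)).symm⟩

theorem stmt10 {𝕜 : Type*} [RCLike 𝕜] {X Y : Type*} [NormedAddCommGroup X] [NormedSpace 𝕜 X]
    [NormedAddCommGroup Y] [NormedSpace 𝕜 Y]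
    (hsmX : NormSmooth 𝕜 X) (hsmY : NormSmooth 𝕜 Y)
    (sipX : X → X → 𝕜) (hX : IsCompatSIP 𝕜 sipX)
    (sipY : Y → Y → 𝕜) (hY : IsCompatSIP 𝕜 sipY)
    (f : X → Y) (hsurj : Function.Surjective f)
    (hf : ∀ x y : X, ‖sipY (f x) (f y)‖ = ‖sipX x y‖) :
    (∀ x : X, x ≠ 0 → f x ≠ 0) ∧
    (∀ x : X, x ≠ 0 → ∀ c : 𝕜, c ≠ 0 → ∃ γ : 𝕜, γ ≠ 0 ∧ f (c • x) = γ • f x) ∧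
    (∀ w : Y, w ≠ 0 → ∃ x : X, x ≠ 0 ∧ ∃ γ : 𝕜, γ ≠ 0 ∧ f x = γ • w) :=
  stmt10_general sipX hX sipY hY f hsurj hf
end

section
/- Let X and Y be smooth real normed spaces with dim X ≥ 2, equipped with their unique compatible semi-inner products, and let f : X → Y be a surjective mapping such that |[f(x), f(y)]| = |[x, y]| for all x, y ∈ X. Then there exist a surjective linear isometry U : X → Y and a function σ : X → ℝ with |σ(x)| = 1 for all x, such that f(x) = σ(x) U x for all x ∈ X. -/
open RCLike

/-!
If `ψ` supports `f z` and `φ` supports `z ≠ 0`, then `[x, z] = ‖z‖ φ x` and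
`[f x, f z] = ‖z‖ ψ (f x)`, so `|ψ ∘ f| = |φ|` and `ψ (f (x + y)) = ± ψ (f x) ± ψ (f y)` for every
support functional `ψ` of `Y` at a nonzero point. Finitely many nonzero vectors are moved by a single
support functional (a functional separating them, restricted to their finite-dimensional span,
attains its norm there; extend it by Hahn–Banach), so one choice of signs serves all `ψ`:
`f (x + y) = ± f x ± f y`. Fix support functionals `φ` at some `e ≠ 0` and `ψ` at `f e`, and flip
the sign of `f x` to get `g x` with `ψ (g x) = φ x`. Comparing `ψ`-values shows that `g` is additive
off `ker φ`; it extends to an additive `U = ± f`, which preserves norms, so it is continuous and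
hence real-linear.
-/

theorem eq_one_of_add_eq_mul_add_mul {a b α β : ℝ} (hα : |α| = 1) (hβ : |β| = 1) (ha : a ≠ 0)
    (hb : b ≠ 0) (hab : a + b ≠ 0) (h : a + b = α * a + β * b) : α = 1 ∧ β = 1 := by
  rcases (abs_eq zero_le_one).mp hα with rfl | rfl <;>
    rcases (abs_eq zero_le_one).mp hβ with rfl | rfl
  · exact ⟨rfl, rfl⟩
  · exact absurd (by linarith : b = 0) hb
  · exact absurd (by linarith : a = 0) ha
  · exact absurd (by linarith : a + b = 0) hab

theorem exists_abs_eq_one_mul_of_abs_eq {a b : ℝ} (h : |a| = |b|) :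
    ∃ σ : ℝ, |σ| = 1 ∧ a = σ * b := by
  rcases abs_eq_abs.mp h with h | h
  · exact ⟨1, abs_one, by rw [h, one_mul]⟩
  · exact ⟨-1, by rw [abs_neg, abs_one], by rw [h, neg_one_mul]⟩

theorem mul_self_eq_one_of_abs_eq_one {σ : ℝ} (h : |σ| = 1) : σ * σ = 1 := by
  rw [← abs_mul_abs_self, h, one_mul]

theorem exists_suppFunc_s11 (𝕜 : Type*) [RCLike 𝕜] {Z : Type*} [NormedAddCommGroup Z]
    [NormedSpace 𝕜 Z] {z : Z} (hz : z ≠ 0) : ∃ φ : Z →L[𝕜] 𝕜, SuppFunc 𝕜 z φ :=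
  exists_dual_vector 𝕜 z (norm_ne_zero_iff.mpr hz)

theorem IsCompatSIP.sip_self {𝕜 : Type*} [RCLike 𝕜] {Z : Type*} [NormedAddCommGroup Z]
    [NormedSpace 𝕜 Z] {sip : Z → Z → 𝕜} (h : IsCompatSIP 𝕜 sip) (z : Z) :
    sip z z = (‖z‖ : 𝕜) ^ 2 := by
  rcases eq_or_ne z 0 with rfl | hz
  · simp [h.1]
  · obtain ⟨φ, hφ⟩ := exists_suppFunc_s11 𝕜 hz
    rw [h.2 z z φ hφ, hφ.2, sq]

section SupportFunctionals

variable {Z : Type*} [NormedAddCommGroup Z] [NormedSpace ℝ Z]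

theorem ContinuousLinearMap.exists_suppFunc_inv_norm_smul [FiniteDimensional ℝ Z] [Nontrivial Z]
    (χ : Z →L[ℝ] ℝ) (hχ : χ ≠ 0) : ∃ v : Z, v ≠ 0 ∧ SuppFunc ℝ v (‖χ‖⁻¹ • χ) := by
  obtain ⟨x, hx, hmax⟩ := ((isCompact_sphere (0 : Z) 1).image
    χ.continuous.norm).sSup_mem ((NormedSpace.sphere_nonempty.mpr zero_le_one).image _)
  replace hmax : |χ x| = ‖χ‖ := by rw [← χ.sSup_sphere_eq_norm, ← hmax]; rfl
  rw [mem_sphere_zero_iff_norm] at hx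
  have hχ' : ‖χ‖ ≠ 0 := mt χ.opNorm_zero_iff.mp hχ
  have hnorm : ‖‖χ‖⁻¹ • χ‖ = 1 := by rw [norm_smul, norm_inv, norm_norm, inv_mul_cancel₀ hχ']
  have supp {v : Z} (hv : ‖v‖ = 1) (hχv : χ v = ‖χ‖) : v ≠ 0 ∧ SuppFunc ℝ v (‖χ‖⁻¹ • χ) :=
    ⟨norm_ne_zero_iff.mp (hv ▸ one_ne_zero), hnorm, by
      rw [smul_apply, hχv, smul_eq_mul, inv_mul_cancel₀ hχ', hv, RCLike.ofReal_one]⟩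
  rcases le_total 0 (χ x) with hχx | hχx
  · exact ⟨x, supp hx (by rw [← hmax, abs_of_nonneg hχx])⟩
  · exact ⟨-x, supp (by rw [norm_neg, hx]) (by rw [← hmax, abs_of_nonpos hχx, map_neg])⟩

theorem exists_dual_forall_apply_ne_zero (s : Finset Z) (h0 : (0 : Z) ∉ s) :
    ∃ θ : Z →L[ℝ] ℝ, ∀ w ∈ s, θ w ≠ 0 := by
  obtain ⟨θ, hθ⟩ := Module.Dual.exists_forall_ne_zero_of_forall_exists
    (fun w : s ↦ (ContinuousLinearMap.apply ℝ ℝ (w : Z) : (Z →L[ℝ] ℝ) →ₗ[ℝ] ℝ)) fun w ↦ by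
      obtain ⟨θ, -, hθ⟩ := exists_suppFunc_s11 ℝ (ne_of_mem_of_not_mem w.2 h0)
      refine ⟨θ, ?_⟩
      simp [hθ, ne_of_mem_of_not_mem w.2 h0]
  exact ⟨θ, fun w hw ↦ hθ ⟨w, hw⟩⟩

theorem exists_suppFunc_forall_apply_ne_zero (s : Finset Z) (hs : s.Nonempty)
    (h0 : (0 : Z) ∉ s) : ∃ (v : Z) (ψ : Z →L[ℝ] ℝ), v ≠ 0 ∧ SuppFunc ℝ v ψ ∧ ∀ w ∈ s, ψ w ≠ 0 := by
  obtain ⟨θ, hθ⟩ := exists_dual_forall_apply_ne_zero s h0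
  set V := Submodule.span ℝ (s : Set Z)
  have hV (w : Z) (hw : w ∈ s) : w ∈ V := Submodule.subset_span hw
  set χ : V →L[ℝ] ℝ := θ.comp V.subtypeL
  obtain ⟨w, hw⟩ := hs
  have : Nontrivial V :=
    ⟨⟨w, hV w hw⟩, 0, fun h ↦ h0 <| by rwa [← show w = 0 from congrArg Subtype.val h]⟩
  have hχ : χ ≠ 0 := fun h ↦ hθ w hw <| by
    simpa [χ] using DFunLike.congr_fun h (⟨w, hV w hw⟩ : V)
  obtain ⟨v, hv, hnorm, hχv⟩ := χ.exists_suppFunc_inv_norm_smul hχ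
  obtain ⟨Ψ, hΨ, hΨnorm⟩ := exists_extension_norm_eq V (‖χ‖⁻¹ • χ : V →L[ℝ] ℝ)
  refine ⟨v, Ψ, by simpa using hv, ⟨hΨnorm.trans hnorm, by rw [hΨ, hχv]; rfl⟩, fun w hw ↦ ?_⟩
  rw [hΨ ⟨w, hV w hw⟩, smul_apply, smul_eq_mul]
  exact mul_ne_zero (inv_ne_zero (mt χ.opNorm_zero_iff.mp hχ)) (hθ w hw)

theorem exists_signs_eq_smul_add_smul {p q r : Z}
    (h : ∀ (v : Z) (ψ : Z →L[ℝ] ℝ), v ≠ 0 → SuppFunc ℝ v ψ →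
      ∃ ε δ : ℝ, |ε| = 1 ∧ |δ| = 1 ∧ ψ p = ε * ψ q + δ * ψ r) :
    ∃ ε δ : ℝ, |ε| = 1 ∧ |δ| = 1 ∧ p = ε • q + δ • r := by
  classical
  by_contra! hne
  have hsigns {ε : ℝ} : ε ∈ ({1, -1} : Finset ℝ) ↔ |ε| = 1 := by
    rw [abs_eq zero_le_one, Finset.mem_insert, Finset.mem_singleton]
  set s := (({1, -1} : Finset ℝ) ×ˢ ({1, -1} : Finset ℝ)).image
    fun εδ : ℝ × ℝ ↦ p - (εδ.1 • q + εδ.2 • r)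
  have h0 : (0 : Z) ∉ s := by
    simp only [s, Finset.mem_image, Finset.mem_product, hsigns, Prod.exists, sub_eq_zero,
      not_exists, not_and]
    exact fun ε δ ⟨hε, hδ⟩ ↦ hne ε δ hε hδ
  obtain ⟨v, ψ, hv, hψ, hψs⟩ := exists_suppFunc_forall_apply_ne_zero s (by simp [s]) h0
  obtain ⟨ε, δ, hε, hδ, hψp⟩ := h v ψ hv hψ
  refine hψs _ (Finset.mem_image_of_mem _ (Finset.mk_mem_product (hsigns.mpr hε)
    (hsigns.mpr hδ))) ?_
  simp [hψp]

end SupportFunctionals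

section Extension

variable {X Y K : Type*} [AddCommGroup X] [AddCommGroup Y] [AddCommGroup K] [Infinite K]

/- `U x := g (x + a) - g a` for any `a` with `a, x + a ∉ ker φ`. Two admissible base points are
joined through a third one `c` chosen generically (`K` is infinite), so that each move changes the
base point by a vector off `ker φ`, where additivity of `g` applies. -/
theorem AddMonoidHom.exists_addMonoidHom_eq_map_add_sub (φ : X →+ K)
    (hφ : Function.Surjective φ) (g : X → Y)
    (hg : ∀ x y, φ x ≠ 0 → φ y ≠ 0 → φ (x + y) ≠ 0 → g (x + y) = g x + g y) :
    ∃ U : X →+ Y, ∀ x a, φ a ≠ 0 → φ (x + a) ≠ 0 → U x = g (x + a) - g a := by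
  classical
  have avoid (S : Finset K) : ∃ a, φ a ∉ S := by
    obtain ⟨c, hc⟩ := Infinite.exists_notMem_finset S
    obtain ⟨a, rfl⟩ := hφ c
    exact ⟨a, hc⟩
  have map_add_ne_zero {x a : X} (h : φ a ≠ -φ x) : φ (x + a) ≠ 0 := by
    rw [map_add]; exact fun h' ↦ h (eq_neg_of_add_eq_zero_right h')
  have move {x a b : X} (ha : φ a ≠ 0) (hxa : φ (x + a) ≠ 0) (hb : φ b ≠ 0)
      (hxb : φ (x + b) ≠ 0) (hba : φ (b - a) ≠ 0) : g (x + a) - g a = g (x + b) - g b := by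
    have h₁ := hg (x + a) (b - a) hxa hba (by rwa [add_add_sub_cancel])
    have h₂ := hg a (b - a) ha hba (by rwa [add_sub_cancel])
    rw [add_add_sub_cancel] at h₁
    rw [add_sub_cancel] at h₂
    rw [h₁, h₂]
    abel
  have base_indep {x a b : X} (ha : φ a ≠ 0) (hxa : φ (x + a) ≠ 0) (hb : φ b ≠ 0)
      (hxb : φ (x + b) ≠ 0) : g (x + a) - g a = g (x + b) - g b := by
    obtain ⟨c, hc⟩ := avoid {0, -φ x, φ a, φ b}
    simp only [Finset.mem_insert, Finset.mem_singleton, not_or] at hc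
    obtain ⟨hc₀, hcx, hca, hcb⟩ := hc
    have hxc := map_add_ne_zero hcx
    rw [move ha hxa hc₀ hxc (by rw [map_sub]; exact sub_ne_zero.mpr hca),
      move hc₀ hxc hb hxb (by rw [map_sub]; exact sub_ne_zero.mpr (Ne.symm hcb))]
  have exists_base (x : X) : ∃ a, φ a ≠ 0 ∧ φ (x + a) ≠ 0 := by
    obtain ⟨a, ha⟩ := avoid {0, -φ x}
    simp only [Finset.mem_insert, Finset.mem_singleton, not_or] at ha
    exact ⟨a, ha.1, map_add_ne_zero ha.2⟩
  choose a ha hxa using exists_base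
  refine ⟨AddMonoidHom.mk' (fun x ↦ g (x + a x) - g (a x)) fun x y ↦ ?_,
    fun x b hb hxb ↦ base_indep (ha x) (hxa x) hb hxb⟩
  obtain ⟨c, hc⟩ := avoid {0, -φ y, -φ (x + y)}
  simp only [Finset.mem_insert, Finset.mem_singleton, not_or] at hc
  obtain ⟨hc₀, hyc, hxyc⟩ := hc
  have hyc' := map_add_ne_zero hyc
  have hxyc' : φ (x + (y + c)) ≠ 0 := by rw [← add_assoc]; exact map_add_ne_zero hxyc
  change g (x + y + a (x + y)) - g (a (x + y)) = g (x + a x) - g (a x) + (g (y + a y) - g (a y))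
  rw [base_indep (ha _) (hxa _) hc₀ (map_add_ne_zero hxyc), base_indep (ha x) (hxa x) hyc' hxyc',
    base_indep (ha y) (hxa y) hc₀ hyc', add_assoc]
  abel

end Extension

section SignCorrection

variable {X Y : Type*} [AddCommGroup X] [Module ℝ X] [AddCommGroup Y] [Module ℝ Y]

/-- The sign `s x` for which `ψ (s x • f x) = φ x`, when `φ x ≠ 0`. -/
noncomputable def phaseSign (f : X → Y) (φ : X →ₗ[ℝ] ℝ) (ψ : Y →ₗ[ℝ] ℝ) (x : X) : ℝ :=
  ψ (f x) / φ x

variable {f : X → Y} {φ : X →ₗ[ℝ] ℝ} {ψ : Y →ₗ[ℝ] ℝ}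

theorem abs_phaseSign (hψ : ∀ x, |ψ (f x)| = |φ x|) {x : X} (hx : φ x ≠ 0) :
    |phaseSign f φ ψ x| = 1 := by
  rw [phaseSign, abs_div, hψ, div_self (abs_ne_zero.mpr hx)]

theorem phaseSign_mul (hψ : ∀ x, |ψ (f x)| = |φ x|) (x : X) :
    phaseSign f φ ψ x * φ x = ψ (f x) := by
  rcases eq_or_ne (φ x) 0 with hx | hx
  · rw [hx, mul_zero, eq_comm, ← abs_eq_zero, hψ, hx, abs_zero]
  · exact div_mul_cancel₀ _ hx

theorem phaseSign_smul_map_add (hψ : ∀ x, |ψ (f x)| = |φ x|)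
    (hadd : ∀ x y, ∃ ε δ : ℝ, |ε| = 1 ∧ |δ| = 1 ∧ f (x + y) = ε • f x + δ • f y) {x y : X}
    (hx : φ x ≠ 0) (hy : φ y ≠ 0) (hxy : φ (x + y) ≠ 0) :
    phaseSign f φ ψ (x + y) • f (x + y) = phaseSign f φ ψ x • f x + phaseSign f φ ψ y • f y := by
  obtain ⟨ε, δ, hε, hδ, hf⟩ := hadd x y
  have habs := abs_phaseSign hψ hxy
  have habsx := abs_phaseSign hψ hx
  have habsy := abs_phaseSign hψ hy
  have hψf := phaseSign_mul hψ
  set s := phaseSign f φ ψ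
  have hs := mul_self_eq_one_of_abs_eq_one habs
  have hsx := mul_self_eq_one_of_abs_eq_one habsx
  have hsy := mul_self_eq_one_of_abs_eq_one habsy
  have key : φ x + φ y = (s (x + y) * ε * s x) * φ x + (s (x + y) * δ * s y) * φ y := by
    have h := congrArg ψ hf
    simp only [map_add, map_smul, smul_eq_mul, ← hψf] at h
    linear_combination s (x + y) * h - (φ x + φ y) * hs
  obtain ⟨h₁, h₂⟩ := eq_one_of_add_eq_mul_add_mul
    (by rw [abs_mul, abs_mul, habs, hε, habsx, one_mul, one_mul])
    (by rw [abs_mul, abs_mul, habs, hδ, habsy, one_mul, one_mul]) hx hy (by rwa [← map_add]) key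
  rw [hf, smul_add, smul_smul, smul_smul]
  congr 2
  · linear_combination s x * h₁ - s (x + y) * ε * hsx
  · linear_combination s y * h₂ - s (x + y) * δ * hsy

theorem phaseSign_smul_map_add_of_apply_eq_zero (hψ : ∀ x, |ψ (f x)| = |φ x|)
    (hadd : ∀ x y, ∃ ε δ : ℝ, |ε| = 1 ∧ |δ| = 1 ∧ f (x + y) = ε • f x + δ • f y) {x a : X}
    (hx : φ x = 0) (ha : φ a ≠ 0) : ∃ σ : ℝ, |σ| = 1 ∧
      phaseSign f φ ψ (x + a) • f (x + a) = σ • f x + phaseSign f φ ψ a • f a := by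
  obtain ⟨ε, δ, hε, hδ, hf⟩ := hadd x a
  have hxa : φ (x + a) = φ a := by rw [map_add, hx, zero_add]
  have habs := abs_phaseSign hψ (hxa ▸ ha)
  have hψf := phaseSign_mul hψ
  set s := phaseSign f φ ψ
  have key : s (x + a) * δ = s a := by
    have h := congrArg ψ hf
    rw [map_add, map_smul, map_smul, ← hψf, ← hψf, ← hψf, hx, hxa, smul_eq_mul, smul_eq_mul,
      mul_zero, mul_zero, zero_add, ← mul_assoc] at h
    rw [mul_right_cancel₀ ha h, mul_comm δ, mul_assoc, mul_self_eq_one_of_abs_eq_one hδ, mul_one]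
  refine ⟨s (x + a) * ε, by rw [abs_mul, habs, hε, one_mul], ?_⟩
  rw [hf, smul_add, smul_smul, smul_smul, key]

theorem exists_addMonoidHom_eq_smul (hφ : φ ≠ 0) (hψ : ∀ x, |ψ (f x)| = |φ x|)
    (hadd : ∀ x y, ∃ ε δ : ℝ, |ε| = 1 ∧ |δ| = 1 ∧ f (x + y) = ε • f x + δ • f y) :
    ∃ U : X →+ Y, ∀ x, ∃ σ : ℝ, |σ| = 1 ∧ f x = σ • U x := by
  have hφsurj := LinearMap.surjective_iff_ne_zero.mpr hφ
  obtain ⟨U, hU⟩ := φ.toAddMonoidHom.exists_addMonoidHom_eq_map_add_sub hφsurj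
    (fun x ↦ phaseSign f φ ψ x • f x) fun x y ↦ phaseSign_smul_map_add hψ hadd
  refine ⟨U, fun x ↦ ?_⟩
  suffices ∃ σ : ℝ, |σ| = 1 ∧ U x = σ • f x by
    obtain ⟨σ, hσ, hUx⟩ := this
    exact ⟨σ, hσ, by rw [hUx, smul_smul, mul_self_eq_one_of_abs_eq_one hσ, one_smul]⟩
  rcases ne_or_eq (φ x) 0 with hx | hx
  · have h2x : φ (x + x) ≠ 0 := by rw [map_add, ← two_mul]; exact mul_ne_zero two_ne_zero hx
    refine ⟨phaseSign f φ ψ x, abs_phaseSign hψ hx, ?_⟩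
    rw [hU x x hx h2x, phaseSign_smul_map_add hψ hadd hx hx h2x, add_sub_cancel_right]
  · obtain ⟨a, ha⟩ := hφsurj 1
    have ha' : φ a ≠ 0 := ha ▸ one_ne_zero
    obtain ⟨σ, hσ, h⟩ := phaseSign_smul_map_add_of_apply_eq_zero hψ hadd hx ha'
    have hxa : φ (x + a) ≠ 0 := by rwa [map_add, hx, zero_add]
    exact ⟨σ, hσ, by rw [hU x a ha' hxa, h, add_sub_cancel_right]⟩

end SignCorrection

section PhaseIsometry
variable {X Y : Type*} [NormedAddCommGroup X] [NormedSpace ℝ X] [NormedAddCommGroup Y]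
  [NormedSpace ℝ Y] {sipX : X → X → ℝ} {sipY : Y → Y → ℝ} {f : X → Y}

theorem norm_map_of_norm_sip_eq (hX : IsCompatSIP ℝ sipX) (hY : IsCompatSIP ℝ sipY)
    (hf : ∀ x y : X, ‖sipY (f x) (f y)‖ = ‖sipX x y‖) (x : X) : ‖f x‖ = ‖x‖ := by
  have h := hf x x
  rw [hX.sip_self, hY.sip_self] at h
  simpa [sq_abs, abs_norm] using h

theorem map_ne_zero_iff_of_norm_sip_eq (hX : IsCompatSIP ℝ sipX) (hY : IsCompatSIP ℝ sipY)
    (hf : ∀ x y : X, ‖sipY (f x) (f y)‖ = ‖sipX x y‖) {x : X} : f x ≠ 0 ↔ x ≠ 0 := by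
  rw [← norm_ne_zero_iff, norm_map_of_norm_sip_eq hX hY hf, norm_ne_zero_iff]

theorem abs_suppFunc_map_eq (hX : IsCompatSIP ℝ sipX) (hY : IsCompatSIP ℝ sipY)
    (hf : ∀ x y : X, ‖sipY (f x) (f y)‖ = ‖sipX x y‖) {z : X} (hz : z ≠ 0) {φ : X →L[ℝ] ℝ}
    (hφ : SuppFunc ℝ z φ) {ψ : Y →L[ℝ] ℝ} (hψ : SuppFunc ℝ (f z) ψ) (x : X) :
    |ψ (f x)| = |φ x| := by
  have h := hf x z
  rw [hX.2 x z φ hφ, hY.2 (f x) (f z) ψ hψ, norm_map_of_norm_sip_eq hX hY hf] at h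
  simpa [abs_mul, hz] using h

theorem exists_signs_map_add (hX : IsCompatSIP ℝ sipX) (hY : IsCompatSIP ℝ sipY)
    (hsurj : Function.Surjective f) (hf : ∀ x y : X, ‖sipY (f x) (f y)‖ = ‖sipX x y‖)
    (x y : X) : ∃ ε δ : ℝ, |ε| = 1 ∧ |δ| = 1 ∧ f (x + y) = ε • f x + δ • f y := by
  refine exists_signs_eq_smul_add_smul fun v ψ hv hψ ↦ ?_
  obtain ⟨z, rfl⟩ := hsurj v
  have hz := (map_ne_zero_iff_of_norm_sip_eq hX hY hf).mp hv
  obtain ⟨φ, hφ⟩ := exists_suppFunc_s11 ℝ hz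
  have key := abs_suppFunc_map_eq hX hY hf hz hφ hψ
  obtain ⟨σ, hσ, hxy⟩ := exists_abs_eq_one_mul_of_abs_eq (key (x + y))
  obtain ⟨σx, hσx, hx⟩ := exists_abs_eq_one_mul_of_abs_eq (key x).symm
  obtain ⟨σy, hσy, hy⟩ := exists_abs_eq_one_mul_of_abs_eq (key y).symm
  refine ⟨σ * σx, σ * σy, by rw [abs_mul, hσ, hσx, one_mul], by rw [abs_mul, hσ, hσy, one_mul], ?_⟩
  rw [hxy, map_add, hx, hy]
  ring

end PhaseIsometry

theorem stmt11_general {X Y : Type*} [NormedAddCommGroup X] [NormedSpace ℝ X]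
    [NormedAddCommGroup Y] [NormedSpace ℝ Y]
    (hdim : 2 ≤ Module.rank ℝ X)
    (sipX : X → X → ℝ) (hX : IsCompatSIP ℝ sipX)
    (sipY : Y → Y → ℝ) (hY : IsCompatSIP ℝ sipY)
    (f : X → Y) (hsurj : Function.Surjective f)
    (hf : ∀ x y : X, ‖sipY (f x) (f y)‖ = ‖sipX x y‖) :
    ∃ U : X →ₗ[ℝ] Y, Function.Surjective U ∧ (∀ x : X, ‖U x‖ = ‖x‖) ∧
      ∃ σ : X → ℝ, (∀ x : X, ‖σ x‖ = 1) ∧ ∀ x : X, f x = σ x • U x := by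
  obtain ⟨e, he⟩ : ∃ e : X, e ≠ 0 :=
    rank_pos_iff_exists_ne_zero.mp (lt_of_lt_of_le (by norm_num) hdim)
  have hnorm := norm_map_of_norm_sip_eq hX hY hf
  obtain ⟨φ, hφ⟩ := exists_suppFunc_s11 ℝ he
  obtain ⟨ψ, hψ⟩ := exists_suppFunc_s11 ℝ ((map_ne_zero_iff_of_norm_sip_eq hX hY hf).mpr he)
  have hφ0 : (φ : X →ₗ[ℝ] ℝ) ≠ 0 := fun h ↦ he <| norm_eq_zero.mp <| by
    simpa [hφ.2] using LinearMap.congr_fun h e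
  obtain ⟨U, hU⟩ := exists_addMonoidHom_eq_smul hφ0 (abs_suppFunc_map_eq hX hY hf he hφ hψ)
    (exists_signs_map_add hX hY hsurj hf)
  choose σ hσ hfU using hU
  have hUnorm (x : X) : ‖U x‖ = ‖x‖ := by
    rw [← hnorm x, hfU x, norm_smul, Real.norm_eq_abs, hσ, one_mul]
  set L := U.toRealLinearMap
    (AddMonoidHomClass.continuous_of_bound U 1 fun x ↦ by rw [hUnorm, one_mul])
  refine ⟨L, fun y ↦ ?_, hUnorm, σ, fun x ↦ by rw [Real.norm_eq_abs, hσ], hfU⟩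
  obtain ⟨x, rfl⟩ := hsurj y
  exact ⟨σ x • x, by rw [ContinuousLinearMap.coe_coe, map_smul, hfU x]; rfl⟩

theorem stmt11 {X Y : Type*} [NormedAddCommGroup X] [NormedSpace ℝ X]
    [NormedAddCommGroup Y] [NormedSpace ℝ Y]
    (hdim : 2 ≤ Module.rank ℝ X)
    (hsmX : NormSmooth ℝ X) (hsmY : NormSmooth ℝ Y)
    (sipX : X → X → ℝ) (hX : IsCompatSIP ℝ sipX)
    (sipY : Y → Y → ℝ) (hY : IsCompatSIP ℝ sipY)
    (f : X → Y) (hsurj : Function.Surjective f)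
    (hf : ∀ x y : X, ‖sipY (f x) (f y)‖ = ‖sipX x y‖) :
    ∃ U : X →ₗ[ℝ] Y, Function.Surjective U ∧ (∀ x : X, ‖U x‖ = ‖x‖) ∧
      ∃ σ : X → ℝ, (∀ x : X, ‖σ x‖ = 1) ∧ ∀ x : X, f x = σ x • U x :=
  stmt11_general hdim sipX hX sipY hY f hsurj hf
end

section
/- Let X and Y be real smooth normed spaces with Y strictly convex, and let f : X → Y be a surjective map satisfying {‖f(x)+f(y)‖, ‖f(x)-f(y)‖} = {‖x+y‖, ‖x-y‖} as sets for all x, y ∈ X. Then ‖f(x)‖ = ‖x‖ for all x, and f(2x) = 2f(x) or f(2x) = -2f(x) for every x ∈ X. -/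
open RCLike

theorem stmt14 {X Y : Type*} [NormedAddCommGroup X] [NormedSpace ℝ X]
    [NormedAddCommGroup Y] [NormedSpace ℝ Y] [StrictConvexSpace ℝ Y]
    (hsmX : NormSmooth ℝ X) (hsmY : NormSmooth ℝ Y)
    (f : X → Y) (hsurj : Function.Surjective f)
    (hf : ∀ x y : X, ({‖f x + f y‖, ‖f x - f y‖} : Set ℝ) = {‖x + y‖, ‖x - y‖}) :
    (∀ x : X, ‖f x‖ = ‖x‖) ∧
    ∀ x : X, f ((2 : ℝ) • x) = (2 : ℝ) • f x ∨ f ((2 : ℝ) • x) = -((2 : ℝ) • f x) := by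
  have hnorm : ∀ x : X, ‖f x‖ = ‖x‖ := by
    intro x
    have h := hf x x
    have h1 : (‖f x + f x‖ : ℝ) ∈ ({‖x + x‖, ‖x - x‖} : Set ℝ) := by
      rw [← h]; left; rfl
    simp only [sub_self, norm_zero, Set.mem_insert_iff, Set.mem_singleton_iff] at h1
    rcases h1 with h1 | h1
    · have : ‖(2:ℝ)‖ * ‖f x‖ = ‖(2:ℝ)‖ * ‖x‖ := by
        rw [← norm_smul, ← norm_smul, two_smul, two_smul]; exact h1
      have h2 : (0:ℝ) < ‖(2:ℝ)‖ := by norm_num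
      exact mul_left_cancel₀ h2.ne' this
    · have hfx : f x + f x = 0 := norm_eq_zero.mp h1
      have hfx0 : f x = 0 := by
        have : (2:ℝ) • f x = 0 := by rw [two_smul]; exact hfx
        simpa using this
      have h2 : (‖x + x‖ : ℝ) ∈ ({‖f x + f x‖, ‖f x - f x‖} : Set ℝ) := by
        rw [h]; left; rfl
      simp only [hfx0, add_zero, sub_zero, norm_zero, Set.mem_insert_iff,
        Set.mem_singleton_iff] at h2
      have hx0 : x = 0 := by
        have : (2:ℝ) • x = 0 := by
          rw [two_smul]; exact norm_eq_zero.mp (by rcases h2 with h2 | h2 <;> simpa using h2)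
        simpa using this
      rw [hfx0, hx0]; simp
  refine ⟨hnorm, fun x => ?_⟩
  by_cases hx : x = 0
  · left
    have : f 0 = 0 := by
      have := hnorm 0; simpa using norm_eq_zero.mp (by simpa using this)
    simp [hx, this]
  have hxpos : (0:ℝ) < ‖x‖ := norm_pos_iff.mpr hx
  have h := hf ((2:ℝ) • x) x
  have h3 : ‖(2:ℝ) • x + x‖ = 3 * ‖x‖ := by
    have : (2:ℝ) • x + x = (3:ℝ) • x := by module
    rw [this, norm_smul]; norm_num
  have h1 : ‖(2:ℝ) • x - x‖ = ‖x‖ := by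
    have : (2:ℝ) • x - x = x := by module
    rw [this]
  have hf2 : ‖f ((2:ℝ) • x)‖ = 2 * ‖x‖ := by
    rw [hnorm, norm_smul]; norm_num
  have hfx : ‖f x‖ = ‖x‖ := hnorm x
  have hfx0 : f x ≠ 0 := by
    intro h0; rw [h0, norm_zero] at hfx; exact hx (norm_eq_zero.mp hfx.symm)
  have hf20 : f ((2:ℝ) • x) ≠ 0 := by
    intro h0; rw [h0, norm_zero] at hf2; nlinarith
  rw [h3, h1] at h
  have hmem : (‖f ((2:ℝ) • x) + f x‖ : ℝ) ∈ ({3 * ‖x‖, ‖x‖} : Set ℝ) := by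
    rw [← h]; left; rfl
  have key : ∀ (v : Y), v ≠ 0 → ‖f ((2:ℝ) • x) + v‖ = ‖f ((2:ℝ) • x)‖ + ‖v‖ →
      ‖v‖ = ‖x‖ → f ((2:ℝ) • x) = (2:ℝ) • v := by
    intro v hv hadd hnv
    have hsr : SameRay ℝ (f ((2:ℝ) • x)) v := sameRay_iff_norm_add.mpr hadd
    obtain ⟨r, hr, hrv⟩ := hsr.exists_pos_right hf20 hv
    have hn : ‖f ((2:ℝ) • x)‖ = r * ‖v‖ := by
      rw [hrv, norm_smul, Real.norm_of_nonneg hr.le]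
    rw [hf2, hnv] at hn
    have hr2 : r = 2 := by nlinarith
    rw [hr2] at hrv
    rw [hrv]
  rcases hmem with hc | hc
  · left
    have hadd : ‖f ((2:ℝ) • x) + f x‖ = ‖f ((2:ℝ) • x)‖ + ‖f x‖ := by
      rw [hc, hf2, hfx]; ring
    exact key (f x) hfx0 hadd hfx
  · right
    have hmem2 : (3 * ‖x‖ : ℝ) ∈ ({‖f ((2:ℝ) • x) + f x‖, ‖f ((2:ℝ) • x) - f x‖} : Set ℝ) := by
      rw [h]; left; rfl
    simp only [Set.mem_singleton_iff, Set.mem_insert_iff] at hc hmem2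
    rcases hmem2 with h2 | h2
    · exfalso; rw [hc] at h2; nlinarith
    · have hadd : ‖f ((2:ℝ) • x) + (-f x)‖ = ‖f ((2:ℝ) • x)‖ + ‖-f x‖ := by
        rw [← sub_eq_add_neg, ← h2, hf2, norm_neg, hfx]; ring
      have := key (-f x) (neg_ne_zero.mpr hfx0) hadd (by rw [norm_neg, hfx])
      rw [this]; module
end

section
/- Let X and Y be normed spaces over 𝔽 with semi-inner products [·,·] compatible with their norms, and let f : X → Y be a surjective mapping satisfying [f(x), f(y)] = [x, y] for all x, y ∈ X. Then f is a linear isometry. -/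
open RCLike

lemma sip_eq_zero_iff {𝕜 : Type*} [RCLike 𝕜] {Y : Type*} [NormedAddCommGroup Y]
    [NormedSpace 𝕜 Y] (sip : Y → Y → 𝕜) (h : IsSIP 𝕜 sip) {w : Y}
    (hw : sip w w = 0) : w = 0 := by
  by_contra hne
  have := (h.2.2.2.1 w hne).1
  rw [hw] at this
  simp at this

lemma key {𝕜 : Type*} [RCLike 𝕜] {X Y : Type*} [NormedAddCommGroup X] [NormedSpace 𝕜 X]
    [NormedAddCommGroup Y] [NormedSpace 𝕜 Y]
    (sipY : Y → Y → 𝕜) (hY : IsSIP 𝕜 sipY)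
    (f : X → Y) (hsurj : Function.Surjective f)
    {u v : Y} (h : ∀ z : X, sipY u (f z) = sipY v (f z)) : u = v := by
  have hsub : ∀ w : Y, sipY (u - v) w = sipY u w - sipY v w := by
    intro w
    have h1 := hY.1 (u - v) v w
    rw [sub_add_cancel] at h1
    linear_combination -h1
  have hz : sipY (u - v) (u - v) = 0 := by
    obtain ⟨d, hd⟩ := hsurj (u - v)
    calc sipY (u - v) (u - v) = sipY (u - v) (f d) := by rw [hd]
    _ = sipY u (f d) - sipY v (f d) := hsub (f d)
    _ = 0 := by rw [h d, sub_self]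
  exact sub_eq_zero.mp (sip_eq_zero_iff sipY hY hz)

theorem stmt16 {𝕜 : Type*} [RCLike 𝕜] {X Y : Type*} [NormedAddCommGroup X] [NormedSpace 𝕜 X]
    [NormedAddCommGroup Y] [NormedSpace 𝕜 Y]
    (sipX : X → X → 𝕜) (hX : IsSIP 𝕜 sipX)
    (sipY : Y → Y → 𝕜) (hY : IsSIP 𝕜 sipY)
    (f : X → Y) (hsurj : Function.Surjective f)
    (hf : ∀ x y : X, sipY (f x) (f y) = sipX x y) :
    (∀ x y : X, f (x + y) = f x + f y) ∧
    (∀ (a : 𝕜) (x : X), f (a • x) = a • f x) ∧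
    (∀ x : X, ‖f x‖ = ‖x‖) := by
  refine ⟨?_, ?_, ?_⟩
  · intro x y
    apply key sipY hY f hsurj
    intro z
    rw [hf, hX.1, ← hf x z, ← hf y z, hY.1]
  · intro a x
    apply key sipY hY f hsurj
    intro z
    rw [hf, hX.2.1, ← hf x z, hY.2.1]
  · intro x
    have h1 := hY.2.2.2.2.2 (f x)
    have h2 := hX.2.2.2.2.2 x
    rw [hf] at h1
    have h3 : ((‖f x‖ : 𝕜)) ^ 2 = ((‖x‖ : 𝕜)) ^ 2 := by rw [← h1, h2]
    have h4 : (‖f x‖ : ℝ) ^ 2 = (‖x‖ : ℝ) ^ 2 := by exact_mod_cast h3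
    nlinarith [h4, norm_nonneg (f x), norm_nonneg x]
end
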